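/- arXiv:2504.04183 — 5 statements merged into one kernel-verified Lean document; each statement's English description precedes it below -/
import Mathlib

section
/- Every nonempty exposed face of the permutohedron Perm^{m−1} (a subset F ⊆ Perm^{m−1} of the form F = {x ∈ Perm^{m−1} : φ(y) ≤ φ(x) for all y ∈ Perm^{m−1}} for some linear functional φ on ℝ^m) is equal to F(U_1 | ⋯ | U_p) for a unique ordered partition (U_1 | ⋯ | U_p) of [m]; conversely, for every ordered partition (U_1 | ⋯ | U_p) of [m], the set F(U_1 | ⋯ | U_p) is a nonempty exposed face of Perm^{m−1}. -/
/-- The vertex of the permutohedron corresponding to a permutation `σ` of `[m]`: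
the point `(σ(1), …, σ(m))` (in 0-based coordinates, `i ↦ σ(i) + 1`). -/
def permVertex (m : ℕ) (σ : Equiv.Perm (Fin m)) : Fin m → ℝ :=
  fun i => ((σ i : ℕ) : ℝ) + 1

/-- The permutohedron `Perm^{m-1} ⊂ ℝ^m`: the convex hull of the points
`(σ(1), …, σ(m))` over all permutations `σ` of `[m]`. -/
def permutohedron (m : ℕ) : Set (Fin m → ℝ) :=
  convexHull ℝ {x | ∃ σ : Equiv.Perm (Fin m), x = permVertex m σ}

/-- An ordered partition `(U_1 | ⋯ | U_p)` of `[m]`: a tuple (list) of pairwise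
disjoint nonempty subsets of `[m]` whose union is `[m]`. -/
def IsOrderedPartition (m : ℕ) (L : List (Finset (Fin m))) : Prop :=
  (∀ U ∈ L, U.Nonempty) ∧ L.Pairwise Disjoint ∧ L.foldr (· ∪ ·) ∅ = Finset.univ

/-- `|U_1| + ⋯ + |U_j|`, the sum of the cardinalities of the first `j` parts. -/
def partialCard (m : ℕ) (L : List (Finset (Fin m))) (j : ℕ) : ℕ :=
  ((L.take j).map Finset.card).sum

/-- A permutation `σ` is compatible with the ordered partition `(U_1 | ⋯ | U_p)` if
for every `j` it maps `U_j` bijectively onto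
`{|U_1| + ⋯ + |U_{j-1}| + 1, …, |U_1| + ⋯ + |U_j|}` (here in 0-based form). -/
def Compatible (m : ℕ) (L : List (Finset (Fin m))) (σ : Equiv.Perm (Fin m)) : Prop :=
  ∀ j : Fin L.length, ∀ i : Fin m,
    i ∈ L.get j ↔ partialCard m L j ≤ (σ i : ℕ) ∧ (σ i : ℕ) < partialCard m L (j + 1)

/-- The face `F(U_1 | ⋯ | U_p)` of the permutohedron: the convex hull of the vertices
corresponding to permutations compatible with the ordered partition. -/
def permFace (m : ℕ) (L : List (Finset (Fin m))) : Set (Fin m → ℝ) :=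
  convexHull ℝ {x | ∃ σ : Equiv.Perm (Fin m), Compatible m L σ ∧ x = permVertex m σ}

/-!
At the vertex of `σ` a linear functional with coefficient vector `c` takes the value
`∑ cᵢ (σ(i) + 1)`, so by the rearrangement inequality its maximising vertices are those of the
permutations that vary monotonically with `c`. Counting shows that these are exactly the
permutations compatible with the level sets of `c`, listed by increasing value. Since the
maximisers of a functional on the convex hull of a set form the convex hull of the maximising
points of the set, every exposed face is some `F(U_1 | ⋯ | U_p)`; conversely `F(U_1 | ⋯ | U_p)` is
exposed by the functional whose coefficient at `i` is the index of the block containing `i`.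

For uniqueness, each vertex is the only vertex maximising the functional with its own coordinates
as coefficients, so the face `F(U_1 | ⋯ | U_p)` determines its compatible permutations; the least
value of `σ(i)` over these is the first position of the block containing `i`, and those first
positions determine the ordered partition.
-/

open Finset Function Equiv

section FoldrUnion

variable {α : Type*} [DecidableEq α]

lemma mem_foldr_union_iff {L : List (Finset α)} {a : α} :
    a ∈ L.foldr (· ∪ ·) ∅ ↔ ∃ U ∈ L, a ∈ U := by
  induction L with
  | nil => simp
  | cons U L ih => simp [ih]

lemma card_foldr_union_of_pairwise_disjoint {L : List (Finset α)} (h : L.Pairwise Disjoint) :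
    #(L.foldr (· ∪ ·) ∅) = (L.map card).sum := by
  induction L with
  | nil => simp
  | cons U L ih =>
    rw [List.pairwise_cons] at h
    rw [List.foldr_cons, List.map_cons, List.sum_cons, card_union_of_disjoint, ih h.2]
    refine disjoint_left.2 fun a haU haL => ?_
    obtain ⟨V, hV, haV⟩ := mem_foldr_union_iff.1 haL
    exact disjoint_left.1 (h.1 V hV) haU haV

end FoldrUnion

section ExposedFace

variable {E : Type*} [AddCommGroup E] [Module ℝ E] {s : Set E} {φ : E →ₗ[ℝ] ℝ} {x : E}

lemma mem_convexHull_sep_apply_eq (hx : x ∈ convexHull ℝ s) (hmax : ∀ z ∈ s, φ z ≤ φ x) :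
    x ∈ convexHull ℝ {z ∈ s | φ z = φ x} := by
  classical
  obtain ⟨ι, _, w, z, hw₀, hw₁, hz, rfl⟩ := mem_convexHull_iff_exists_fintype.1 hx
  set x := ∑ i, w i • z i with hxdef
  -- the nonnegative gaps `φ x - φ (z i)` average to zero
  have hgap : ∑ i, w i * (φ x - φ (z i)) = 0 := by
    simp only [hxdef, mul_sub, sum_sub_distrib, ← sum_mul, hw₁, one_mul, map_sum, map_smul,
      smul_eq_mul, sub_self]
  have hsupp : ∀ i, w i ≠ 0 → φ (z i) = φ x := fun i hi => by
    have := (sum_eq_zero_iff_of_nonneg fun i _ =>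
      mul_nonneg (hw₀ i) (sub_nonneg.2 (hmax _ (hz i)))).1 hgap i (mem_univ i)
    linarith [(mul_eq_zero.1 this).resolve_left hi]
  have ht : ∑ i with w i ≠ 0, w i = 1 := by rw [sum_filter_ne_zero, hw₁]
  have hcm : ({i | w i ≠ 0} : Finset ι).centerMass w z = x := by
    rw [centerMass_eq_of_sum_1 _ _ ht, hxdef]
    exact sum_filter_of_ne fun i _ hi h0 => hi (by rw [h0, zero_smul])
  have hzt : ∀ i ∈ ({i | w i ≠ 0} : Finset ι), z i ∈ {z ∈ s | φ z = φ x} :=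
    fun i hi => ⟨hz i, hsupp i (mem_filter.1 hi).2⟩
  have := centerMass_mem_convexHull _ (fun i _ => hw₀ i) (ht ▸ one_pos) hzt
  rwa [hcm] at this

lemma mem_of_mem_convexHull_of_forall_apply_le (hx : x ∈ convexHull ℝ s)
    (hmax : ∀ z ∈ s, φ z ≤ φ x) (huniq : ∀ z ∈ s, φ z = φ x → z = x) : x ∈ s := by
  obtain ⟨z, hzs, hz⟩ := convexHull_nonempty_iff.1 ⟨x, mem_convexHull_sep_apply_eq hx hmax⟩
  exact huniq z hzs hz ▸ hzs

theorem sep_convexHull_forall_apply_le (s : Set E) (φ : E →ₗ[ℝ] ℝ) :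
    {x ∈ convexHull ℝ s | ∀ y ∈ convexHull ℝ s, φ y ≤ φ x} =
      convexHull ℝ {z ∈ s | ∀ y ∈ s, φ y ≤ φ z} := by
  have hle : ∀ {x}, (∀ z ∈ s, φ z ≤ φ x) → ∀ y ∈ convexHull ℝ s, φ y ≤ φ x :=
    fun h y hy => convexHull_min h (convex_halfSpace_le φ.isLinear _) hy
  ext x
  constructor
  · rintro ⟨hx, hxmax⟩
    have hmax : ∀ z ∈ s, φ z ≤ φ x := fun z hz => hxmax z (subset_convexHull ℝ s hz)
    exact convexHull_mono (fun z hz => Set.mem_sep hz.1 fun y hy => hz.2 ▸ hmax y hy)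
      (mem_convexHull_sep_apply_eq hx hmax)
  · intro hx
    obtain ⟨z₀, hz₀s, hz₀⟩ := convexHull_nonempty_iff.1 ⟨x, hx⟩
    have hxz₀ : φ x = φ z₀ :=
      le_antisymm (convexHull_min (fun z hz => hz₀ z hz.1) (convex_halfSpace_le φ.isLinear _) hx)
        (convexHull_min (fun z hz => hz.2 z₀ hz₀s) (convex_halfSpace_ge φ.isLinear _) hx)
    exact ⟨convexHull_mono (fun z hz => hz.1) hx, fun y hy => hxz₀ ▸ hle hz₀ y hy⟩

end ExposedFace

lemma apply_eq_sum_apply_single_mul {ι R : Type*} [Fintype ι] [DecidableEq ι] [CommSemiring R]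
    (φ : (ι → R) →ₗ[R] R) (x : ι → R) : φ x = ∑ i, φ (Pi.single i 1) * x i := by
  rw [← (LinearEquiv.piRing R R ι R).symm_apply_apply φ, LinearEquiv.piRing_symm_apply]
  simp [mul_comm]

lemma piRing_symm_apply_single {ι R : Type*} [Fintype ι] [DecidableEq ι] [CommSemiring R]
    (c : ι → R) (i : ι) : (LinearEquiv.piRing R R ι R).symm c (Pi.single i 1) = c i := by
  simp [Pi.single_apply]

section Counting

variable {ι α : Type*} [Fintype ι] [LinearOrder α]

def numLT (c : ι → α) (i : ι) : ℕ := #{i' | c i' < c i}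

def numLE (c : ι → α) (i : ι) : ℕ := #{i' | c i' ≤ c i}

variable {m : ℕ} {c : Fin m → α} {σ : Perm (Fin m)}

lemma numLT_perm (σ : Perm (Fin m)) (i : Fin m) : numLT σ i = σ i := by
  rw [numLT, ← Fin.card_Iio (σ i)]
  exact card_equiv σ fun i' => by simp

lemma numLE_perm (σ : Perm (Fin m)) (i : Fin m) : numLE σ i = σ i + 1 := by
  rw [numLE, ← Fin.card_Iic (σ i)]
  exact card_equiv σ fun i' => by simp

lemma exists_monovary_perm (c : Fin m → α) : ∃ σ : Perm (Fin m), Monovary c σ :=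
  ⟨(Tuple.sort c)⁻¹, fun i j hij => by simpa using Tuple.monotone_sort c hij.le⟩

lemma Monovary.numLT_le (h : Monovary c σ) (i : Fin m) : numLT c i ≤ σ i :=
  calc numLT c i ≤ numLT σ i := card_le_card fun i' hi' => by
        simp only [mem_filter, mem_univ, true_and] at hi' ⊢
        exact (h.symm hi').lt_of_ne fun he => hi'.ne (congrArg c (σ.injective he))
    _ = σ i := numLT_perm σ i

lemma Monovary.lt_numLE (h : Monovary c σ) (i : Fin m) : σ i < numLE c i :=
  calc (σ i : ℕ) < numLE σ i := by rw [numLE_perm]; omega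
    _ ≤ numLE c i := card_le_card fun i' hi' => by
        simp only [mem_filter, mem_univ, true_and] at hi' ⊢
        rcases hi'.lt_or_eq with hlt | he
        · exact h hlt
        · rw [σ.injective he]

lemma monovary_of_forall_numLT_le_of_lt_numLE
    (h : ∀ i, numLT c i ≤ σ i ∧ σ i < numLE c i) : Monovary c σ := by
  intro i j hij
  by_contra! hc
  have : numLE c j ≤ numLT c i := card_le_card fun i' hi' => by
    simp only [mem_filter, mem_univ, true_and] at hi' ⊢
    exact hi'.trans_lt hc
  have := h i
  have := h j
  rw [Fin.lt_def] at hij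
  omega

theorem monovary_iff_forall_numLT_le_and_lt_numLE :
    Monovary c σ ↔ ∀ i, numLT c i ≤ σ i ∧ σ i < numLE c i :=
  ⟨fun h i => ⟨h.numLT_le i, h.lt_numLE i⟩, monovary_of_forall_numLT_le_of_lt_numLE⟩

lemma eq_of_monovary {τ : Perm (Fin m)} (h : Monovary τ σ) : σ = τ :=
  Equiv.ext fun i => Fin.ext <| by
    have hlow := h.numLT_le i
    have hhigh := h.lt_numLE i
    rw [numLT_perm] at hlow
    rw [numLE_perm] at hhigh
    omega

end Counting

section OrderedPartition

variable {m : ℕ} {L : List (Finset (Fin m))}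

lemma partialCard_succ (j : ℕ) :
    partialCard m L (j + 1) = partialCard m L j + #(L.getD j ∅) := by
  unfold partialCard
  rw [List.take_add_one, List.map_append, List.sum_append]
  congr 1
  by_cases hj : j < L.length
  · simp [List.getElem?_eq_getElem hj]
  · simp [List.getElem?_eq_none (not_lt.1 hj)]

lemma partialCard_eq_sum_range (j : ℕ) :
    partialCard m L j = ∑ k ∈ range j, #(L.getD k ∅) := by
  induction j with
  | zero => simp [partialCard]
  | succ j ih => rw [sum_range_succ, partialCard_succ, ih]

lemma partialCard_mono : Monotone (partialCard m L) :=
  monotone_nat_of_le_succ fun j => by rw [partialCard_succ]; omega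

lemma eq_of_partialCard_bounds {j k : Fin L.length} {v : ℕ}
    (hj : partialCard m L j ≤ v ∧ v < partialCard m L (j + 1))
    (hk : partialCard m L k ≤ v ∧ v < partialCard m L (k + 1)) : j = k := by
  by_contra hne
  rcases Fin.lt_or_lt_of_ne hne with h | h
  · have := partialCard_mono (L := L) (show (j : ℕ) + 1 ≤ k from h)
    omega
  · have := partialCard_mono (L := L) (show (k : ℕ) + 1 ≤ j from h)
    omega

lemma partialCard_bounds_congr {j : Fin L.length} {v w : ℕ}
    (hv : partialCard m L j ≤ v ∧ v < partialCard m L (j + 1))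
    (hw : partialCard m L j ≤ w ∧ w < partialCard m L (j + 1)) (k : Fin L.length) :
    partialCard m L k ≤ v ∧ v < partialCard m L (k + 1) ↔
      partialCard m L k ≤ w ∧ w < partialCard m L (k + 1) := by
  constructor <;> intro hk
  · rwa [eq_of_partialCard_bounds hk hv]
  · rwa [eq_of_partialCard_bounds hk hw]

lemma IsOrderedPartition.sum_map_card (hL : IsOrderedPartition m L) : (L.map card).sum = m := by
  rw [← card_foldr_union_of_pairwise_disjoint hL.2.1, hL.2.2, card_univ, Fintype.card_fin]

lemma IsOrderedPartition.partialCard_le (hL : IsOrderedPartition m L) (j : ℕ) :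
    partialCard m L j ≤ m :=
  calc partialCard m L j ≤ partialCard m L j + ((L.drop j).map card).sum := Nat.le_add_right _ _
    _ = m := by
      rw [partialCard, ← List.sum_append, ← List.map_append, List.take_append_drop,
        hL.sum_map_card]

lemma IsOrderedPartition.partialCard_lt_succ (hL : IsOrderedPartition m L) {j : ℕ}
    (hj : j < L.length) : partialCard m L j < partialCard m L (j + 1) := by
  rw [partialCard_succ, List.getD_eq_getElem L ∅ hj]
  have := card_pos.2 (hL.1 _ (List.getElem_mem hj))
  omega

lemma IsOrderedPartition.strictMonoOn_partialCard (hL : IsOrderedPartition m L) :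
    StrictMonoOn (partialCard m L) (Set.Iic L.length) := fun _ _ _ hk hjk =>
  (hL.partialCard_lt_succ (hjk.trans_le hk)).trans_le (partialCard_mono hjk)

lemma IsOrderedPartition.exists_mem_get (hL : IsOrderedPartition m L) (i : Fin m) :
    ∃ j, i ∈ L.get j := by
  obtain ⟨U, hU, hiU⟩ := mem_foldr_union_iff.1 (hL.2.2 ▸ mem_univ i)
  obtain ⟨j, rfl⟩ := List.mem_iff_get.1 hU
  exact ⟨j, hiU⟩

lemma IsOrderedPartition.eq_of_mem_get (hL : IsOrderedPartition m L) {i : Fin m}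
    {j k : Fin L.length} (hj : i ∈ L.get j) (hk : i ∈ L.get k) : j = k := by
  by_contra hne
  have hdisj := List.pairwise_iff_get.1 hL.2.1
  rcases Fin.lt_or_lt_of_ne hne with h | h
  · exact disjoint_left.1 (hdisj j k h) hj hk
  · exact disjoint_left.1 (hdisj k j h) hk hj

lemma IsOrderedPartition.card_filter_eq_partialCard (hL : IsOrderedPartition m L)
    {p : Fin m → Prop} [DecidablePred p] {n : ℕ} (hn : n ≤ L.length)
    (hp : ∀ k i, i ∈ L.get k → (p i ↔ (k : ℕ) < n)) :
    #{i | p i} = partialCard m L n := by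
  have hget : ∀ k (hk : k < L.length), L.getD k ∅ = L.get ⟨k, hk⟩ :=
    fun k hk => List.getD_eq_getElem L ∅ hk
  have hset : ({i | p i} : Finset (Fin m)) = (range n).biUnion (L.getD · ∅) := by
    ext i
    simp only [mem_filter, mem_univ, true_and, mem_biUnion, mem_range]
    obtain ⟨k, hk⟩ := hL.exists_mem_get i
    constructor
    · intro hpi
      exact ⟨k, (hp k i hk).1 hpi, by rwa [hget k k.isLt]⟩
    · rintro ⟨k', hk'n, hik'⟩
      rw [hget k' (hk'n.trans_le hn)] at hik'
      rw [hp k i hk, ← hL.eq_of_mem_get hik' hk]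
      exact hk'n
  rw [hset, card_biUnion, partialCard_eq_sum_range]
  intro a ha b hb hab
  rw [coe_range, Set.mem_Iio] at ha hb
  have hdisj := List.pairwise_iff_get.1 hL.2.1
  change Disjoint (L.getD a ∅) (L.getD b ∅)
  rw [hget a (ha.trans_le hn), hget b (hb.trans_le hn)]
  rcases hab.lt_or_gt with h | h
  · exact hdisj ⟨a, _⟩ ⟨b, _⟩ (Fin.mk_lt_mk.2 h)
  · exact (hdisj ⟨b, _⟩ ⟨a, _⟩ (Fin.mk_lt_mk.2 h)).symm

def blockIndex (L : List (Finset (Fin m))) (i : Fin m) : ℕ := L.findIdx (i ∈ ·)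

lemma IsOrderedPartition.blockIndex_eq (hL : IsOrderedPartition m L) {i : Fin m}
    {j : Fin L.length} (hi : i ∈ L.get j) : blockIndex L i = j := by
  have hlt : blockIndex L i < L.length :=
    List.findIdx_lt_length_of_exists ⟨L.get j, L.get_mem j, by simpa using hi⟩
  have hmem : i ∈ L.get ⟨blockIndex L i, hlt⟩ :=
    of_decide_eq_true (List.findIdx_getElem (w := hlt))
  exact congrArg Fin.val (hL.eq_of_mem_get hmem hi)

end OrderedPartition

section BlockOrdered

variable {m : ℕ} {L : List (Finset (Fin m))} {α : Type*} [LinearOrder α] {c : Fin m → α}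

def BlockOrdered (L : List (Finset (Fin m))) (c : Fin m → α) : Prop :=
  ∀ ⦃j k : Fin L.length⦄ ⦃i i' : Fin m⦄,
    i ∈ L.get j → i' ∈ L.get k → (c i < c i' ↔ j < k)

lemma BlockOrdered.eq_of_mem_get (hc : BlockOrdered L c) {j : Fin L.length} {i i' : Fin m}
    (hi : i ∈ L.get j) (hi' : i' ∈ L.get j) : c i = c i' :=
  le_antisymm (not_lt.1 fun h => lt_irrefl j ((hc hi' hi).1 h))
    (not_lt.1 fun h => lt_irrefl j ((hc hi hi').1 h))

lemma BlockOrdered.numLT_eq (hL : IsOrderedPartition m L) (hc : BlockOrdered L c) {i : Fin m}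
    {j : Fin L.length} (hi : i ∈ L.get j) : numLT c i = partialCard m L j :=
  hL.card_filter_eq_partialCard j.isLt.le fun _ _ hi' => hc hi' hi

lemma BlockOrdered.numLE_eq (hL : IsOrderedPartition m L) (hc : BlockOrdered L c) {i : Fin m}
    {j : Fin L.length} (hi : i ∈ L.get j) : numLE c i = partialCard m L (j + 1) :=
  hL.card_filter_eq_partialCard j.isLt fun k _ hi' => by
    rw [← not_lt, hc hi hi', Fin.lt_def]
    omega

theorem compatible_iff_monovary (hL : IsOrderedPartition m L) (hc : BlockOrdered L c)
    (σ : Perm (Fin m)) : Compatible m L σ ↔ Monovary c σ := by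
  rw [monovary_iff_forall_numLT_le_and_lt_numLE]
  constructor
  · intro h i
    obtain ⟨j, hj⟩ := hL.exists_mem_get i
    rw [hc.numLT_eq hL hj, hc.numLE_eq hL hj]
    exact (h j i).1 hj
  · intro h j i
    obtain ⟨k, hk⟩ := hL.exists_mem_get i
    have hbounds := h i
    rw [hc.numLT_eq hL hk, hc.numLE_eq hL hk] at hbounds
    constructor
    · intro hj
      rwa [hL.eq_of_mem_get hj hk]
    · intro hj
      rwa [eq_of_partialCard_bounds hj hbounds]

lemma IsOrderedPartition.blockOrdered_comp_blockIndex (hL : IsOrderedPartition m L) {f : ℕ → α}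
    (hf : StrictMonoOn f (Set.Iio L.length)) : BlockOrdered L (f ∘ blockIndex L) := by
  intro j k i i' hi hi'
  rw [comp_apply, comp_apply, hL.blockIndex_eq hi, hL.blockIndex_eq hi']
  exact hf.lt_iff_lt j.isLt k.isLt

lemma IsOrderedPartition.blockOrdered_blockIndex (hL : IsOrderedPartition m L) :
    BlockOrdered L fun i => (blockIndex L i : ℝ) :=
  hL.blockOrdered_comp_blockIndex (Nat.strictMono_cast.strictMonoOn _)

def levelPartition (c : Fin m → α) : List (Finset (Fin m)) :=
  (univ.image c).sort.map fun v => ({i | c i = v} : Finset (Fin m))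

lemma isOrderedPartition_levelPartition (c : Fin m → α) :
    IsOrderedPartition m (levelPartition c) := by
  refine ⟨?_, ?_, ?_⟩
  · simp only [levelPartition, List.mem_map, mem_sort, mem_image, mem_univ, true_and]
    rintro _ ⟨_, ⟨i, rfl⟩, rfl⟩
    exact ⟨i, by simp⟩
  · rw [levelPartition, List.pairwise_map]
    refine (sort_nodup _ _).pairwise_of_forall_ne fun v _ w _ hvw => ?_
    exact disjoint_filter.2 fun i _ hv hw => hvw (hv.symm.trans hw)
  · ext i
    simp only [mem_univ, iff_true, mem_foldr_union_iff, levelPartition, List.mem_map, mem_sort,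
      mem_image, true_and]
    exact ⟨_, ⟨c i, ⟨i, rfl⟩, rfl⟩, by simp⟩

lemma blockOrdered_levelPartition (c : Fin m → α) : BlockOrdered (levelPartition c) c := by
  intro j k i i' hi hi'
  rw [List.get_eq_getElem] at hi hi'
  simp only [levelPartition, List.getElem_map, mem_filter, mem_univ, true_and] at hi hi'
  rw [hi, hi']
  exact (sortedLT_sort _).strictMono_get.lt_iff_lt

theorem IsOrderedPartition.levelPartition_eq (hL : IsOrderedPartition m L)
    (hc : BlockOrdered L c) : levelPartition c = L := by
  choose rep hrep using fun j : Fin L.length => hL.1 _ (L.get_mem j)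
  set f : Fin L.length → α := c ∘ rep
  have hf : StrictMono f := fun j k hjk => (hc (hrep j) (hrep k)).2 hjk
  have hfiber : ∀ j i, c i = f j ↔ i ∈ L.get j := by
    intro j i
    obtain ⟨k, hk⟩ := hL.exists_mem_get i
    rw [hc.eq_of_mem_get hk (hrep k)]
    exact ⟨fun h => hf.injective h ▸ hk, fun h => congrArg f (hL.eq_of_mem_get hk h)⟩
  have hsort : (univ.image c).sort = List.ofFn f := by
    have himage : (List.ofFn f).toFinset = univ.image c := by
      ext v
      simp only [List.mem_toFinset, List.mem_ofFn, mem_image, mem_univ, true_and]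
      constructor
      · rintro ⟨j, rfl⟩
        exact ⟨rep j, rfl⟩
      · rintro ⟨i, rfl⟩
        obtain ⟨k, hk⟩ := hL.exists_mem_get i
        exact ⟨k, ((hfiber k i).2 hk).symm⟩
    rw [← himage]
    exact (List.toFinset_sort _ (List.nodup_ofFn.2 hf.injective)).2
      (List.pairwise_ofFn.2 fun j k hjk => (hf hjk).le)
  rw [levelPartition, hsort, List.map_ofFn]
  conv_rhs => rw [← List.ofFn_get L]
  congr 1
  funext j
  ext i
  simp [hfiber]

end BlockOrdered

section Permutohedron

variable {m : ℕ} {L : List (Finset (Fin m))}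

lemma permVertex_injective : Injective (permVertex m) := fun σ τ h =>
  Equiv.ext fun i => Fin.ext (by simpa [permVertex] using congrFun h i)

lemma monovary_permVertex_right_iff {α : Type*} [Preorder α] {c : Fin m → α}
    {σ : Perm (Fin m)} : Monovary c (permVertex m σ) ↔ Monovary c σ := by
  simp only [Monovary, permVertex, add_lt_add_iff_right, Nat.cast_lt, Fin.val_fin_lt]

lemma monovary_permVertex_left_iff {β : Type*} [Preorder β] {g : Fin m → β}
    {τ : Perm (Fin m)} : Monovary (permVertex m τ) g ↔ Monovary τ g := by
  simp only [Monovary, permVertex, add_le_add_iff_right, Nat.cast_le, Fin.val_fin_le]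

theorem forall_apply_permVertex_le_iff_monovary (φ : (Fin m → ℝ) →ₗ[ℝ] ℝ)
    (σ : Perm (Fin m)) :
    (∀ τ, φ (permVertex m τ) ≤ φ (permVertex m σ)) ↔
      Monovary (fun i => φ (Pi.single i 1)) σ := by
  obtain ⟨σ₀, h₀⟩ := exists_monovary_perm fun i => φ (Pi.single i 1)
  replace h₀ := monovary_permVertex_right_iff.2 h₀
  -- Mathlib's rearrangement inequality permutes the entries of `permVertex m σ₀`
  have hcomp : ∀ τ i, permVertex m σ₀ ((σ₀⁻¹ * τ) i) = permVertex m τ i := by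
    simp [permVertex]
  have hle : ∀ τ, φ (permVertex m τ) ≤ φ (permVertex m σ₀) := fun τ => by
    rw [apply_eq_sum_apply_single_mul φ, apply_eq_sum_apply_single_mul φ (permVertex m σ₀)]
    simpa only [hcomp] using h₀.sum_mul_comp_perm_le_sum_mul (σ := σ₀⁻¹ * τ)
  have heq : ∀ τ, φ (permVertex m τ) = φ (permVertex m σ₀) ↔
      Monovary (fun i => φ (Pi.single i 1)) τ := fun τ => by
    rw [apply_eq_sum_apply_single_mul φ, apply_eq_sum_apply_single_mul φ (permVertex m σ₀)]
    simpa only [comp_def, hcomp, monovary_permVertex_right_iff] using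
      h₀.sum_mul_comp_perm_eq_sum_mul_iff (σ := σ₀⁻¹ * τ)
  exact ⟨fun h => (heq σ).1 ((hle σ).antisymm (h σ₀)),
    fun h τ => (hle τ).trans ((heq σ).2 h).ge⟩

theorem forall_apply_permVertex_le_iff_compatible (hL : IsOrderedPartition m L)
    {φ : (Fin m → ℝ) →ₗ[ℝ] ℝ} (hφ : BlockOrdered L fun i => φ (Pi.single i 1))
    (σ : Perm (Fin m)) :
    (∀ τ, φ (permVertex m τ) ≤ φ (permVertex m σ)) ↔ Compatible m L σ := by
  rw [forall_apply_permVertex_le_iff_monovary, compatible_iff_monovary hL hφ]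

theorem sep_permutohedron_forall_apply_le (hL : IsOrderedPartition m L)
    {φ : (Fin m → ℝ) →ₗ[ℝ] ℝ} (hφ : BlockOrdered L fun i => φ (Pi.single i 1)) :
    {x ∈ permutohedron m | ∀ y ∈ permutohedron m, φ y ≤ φ x} = permFace m L := by
  rw [permutohedron, sep_convexHull_forall_apply_le, permFace]
  congr 1
  ext x
  constructor
  · rintro ⟨⟨σ, rfl⟩, hmax⟩
    refine ⟨σ, (forall_apply_permVertex_le_iff_compatible hL hφ σ).1 ?_, rfl⟩
    exact fun τ => hmax _ ⟨τ, rfl⟩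
  · rintro ⟨σ, hσ, rfl⟩
    refine ⟨⟨σ, rfl⟩, ?_⟩
    rintro _ ⟨τ, rfl⟩
    exact (forall_apply_permVertex_le_iff_compatible hL hφ σ).2 hσ τ

lemma IsOrderedPartition.exists_compatible (hL : IsOrderedPartition m L) :
    ∃ σ, Compatible m L σ := by
  obtain ⟨σ, hσ⟩ := exists_monovary_perm fun i => (blockIndex L i : ℝ)
  exact ⟨σ, (compatible_iff_monovary hL hL.blockOrdered_blockIndex σ).2 hσ⟩

lemma permVertex_mem_permFace {σ : Perm (Fin m)} (hσ : Compatible m L σ) :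
    permVertex m σ ∈ permFace m L :=
  subset_convexHull ℝ _ ⟨σ, hσ, rfl⟩

-- the functional with coefficients `permVertex m τ` is maximised on the vertices only at `τ`
lemma compatible_of_permVertex_mem_permFace {τ : Perm (Fin m)}
    (h : permVertex m τ ∈ permFace m L) : Compatible m L τ := by
  set φ := (LinearEquiv.piRing ℝ ℝ (Fin m) ℝ).symm (permVertex m τ)
  have hφ : (fun i => φ (Pi.single i 1)) = permVertex m τ :=
    funext (piRing_symm_apply_single _)
  have hmax : ∀ σ, (∀ ρ, φ (permVertex m ρ) ≤ φ (permVertex m σ)) ↔ σ = τ := by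
    intro σ
    rw [forall_apply_permVertex_le_iff_monovary, hφ, monovary_permVertex_left_iff]
    exact ⟨eq_of_monovary, fun h => h ▸ monovary_self _⟩
  obtain ⟨σ, hσ, hστ⟩ := mem_of_mem_convexHull_of_forall_apply_le (φ := φ) h
    (by rintro _ ⟨σ, -, rfl⟩; exact (hmax τ).2 rfl σ)
    (by
      rintro _ ⟨σ, -, rfl⟩ heq
      rw [(hmax σ).1 fun ρ => heq ▸ (hmax τ).2 rfl ρ])
  rwa [permVertex_injective hστ]

end Permutohedron

section Uniqueness

variable {m : ℕ} {L L' : List (Finset (Fin m))}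

lemma Compatible.trans_swap {σ : Perm (Fin m)} (hσ : Compatible m L σ) {a b : Fin m}
    (hab : ∀ j : Fin L.length, partialCard m L j ≤ a ∧ (a : ℕ) < partialCard m L (j + 1) ↔
      partialCard m L j ≤ b ∧ (b : ℕ) < partialCard m L (j + 1)) :
    Compatible m L (σ.trans (swap a b)) := by
  intro j i
  rw [hσ j i, trans_apply, swap_apply_def]
  split_ifs with ha hb
  · rw [ha, hab]
  · rw [hb, hab]
  · rfl

lemma IsOrderedPartition.exists_compatible_apply_eq (hL : IsOrderedPartition m L) {i : Fin m}
    {j : Fin L.length} (hi : i ∈ L.get j) :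
    ∃ σ, Compatible m L σ ∧ (σ i : ℕ) = partialCard m L j := by
  obtain ⟨σ, hσ⟩ := hL.exists_compatible
  have hstart := hL.partialCard_lt_succ j.isLt
  let b : Fin m := ⟨partialCard m L j, hstart.trans_le (hL.partialCard_le _)⟩
  refine ⟨σ.trans (swap (σ i) b), hσ.trans_swap (partialCard_bounds_congr ((hσ j i).1 hi) ?_),
    by simp [b]⟩
  exact ⟨le_rfl, hstart⟩

lemma IsOrderedPartition.partialCard_blockIndex_le (hL : IsOrderedPartition m L)
    {σ : Perm (Fin m)} (hσ : Compatible m L σ) (i : Fin m) :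
    partialCard m L (blockIndex L i) ≤ σ i := by
  obtain ⟨j, hj⟩ := hL.exists_mem_get i
  rw [hL.blockIndex_eq hj]
  exact ((hσ j i).1 hj).1

lemma partialCard_blockIndex_le_of_compatible_imp (hL : IsOrderedPartition m L)
    (hL' : IsOrderedPartition m L') (h : ∀ σ, Compatible m L' σ → Compatible m L σ)
    (i : Fin m) :
    partialCard m L (blockIndex L i) ≤ partialCard m L' (blockIndex L' i) := by
  obtain ⟨j, hj⟩ := hL'.exists_mem_get i
  obtain ⟨σ, hσ, hσi⟩ := hL'.exists_compatible_apply_eq hj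
  rw [hL'.blockIndex_eq hj, ← hσi]
  exact hL.partialCard_blockIndex_le (h σ hσ) i

-- Both lists are the level partition of the first positions of the blocks, and the first
-- position of the block of `i` is the least value of `σ i` over compatible `σ`.
theorem IsOrderedPartition.eq_of_compatible_iff (hL : IsOrderedPartition m L)
    (hL' : IsOrderedPartition m L') (h : ∀ σ, Compatible m L σ ↔ Compatible m L' σ) :
    L = L' := by
  have hstart : partialCard m L ∘ blockIndex L = partialCard m L' ∘ blockIndex L' :=
    funext fun i => le_antisymm
      (partialCard_blockIndex_le_of_compatible_imp hL hL' (fun σ => (h σ).2) i)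
      (partialCard_blockIndex_le_of_compatible_imp hL' hL (fun σ => (h σ).1) i)
  have hord : ∀ {M : List (Finset (Fin m))}, IsOrderedPartition m M →
      BlockOrdered M (partialCard m M ∘ blockIndex M) := fun hM =>
    hM.blockOrdered_comp_blockIndex (hM.strictMonoOn_partialCard.mono Set.Iio_subset_Iic_self)
  rw [← hL.levelPartition_eq (hord hL), hstart, hL'.levelPartition_eq (hord hL')]

theorem IsOrderedPartition.eq_of_permFace_eq (hL : IsOrderedPartition m L)
    (hL' : IsOrderedPartition m L') (h : permFace m L = permFace m L') : L = L' :=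
  hL.eq_of_compatible_iff hL' fun _ =>
    ⟨fun hσ => compatible_of_permVertex_mem_permFace (h ▸ permVertex_mem_permFace hσ),
      fun hσ => compatible_of_permVertex_mem_permFace (h ▸ permVertex_mem_permFace hσ)⟩

end Uniqueness

theorem stmt2_general (m : ℕ) :
    (∀ F : Set (Fin m → ℝ), F.Nonempty →
      (∃ φ : (Fin m → ℝ) →ₗ[ℝ] ℝ,
        F = {x ∈ permutohedron m | ∀ y ∈ permutohedron m, φ y ≤ φ x}) →
      ∃! L : List (Finset (Fin m)), IsOrderedPartition m L ∧ F = permFace m L) ∧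
    (∀ L : List (Finset (Fin m)), IsOrderedPartition m L →
      (permFace m L).Nonempty ∧
      ∃ φ : (Fin m → ℝ) →ₗ[ℝ] ℝ,
        permFace m L = {x ∈ permutohedron m | ∀ y ∈ permutohedron m, φ y ≤ φ x}) := by
  refine ⟨fun F _ ⟨φ, hF⟩ => ?_, fun L hL => ?_⟩
  · set c := fun i => φ (Pi.single i 1)
    have hFc : F = permFace m (levelPartition c) := by
      rw [hF, sep_permutohedron_forall_apply_le (isOrderedPartition_levelPartition c)
        (blockOrdered_levelPartition c)]
    refine ⟨levelPartition c, ⟨isOrderedPartition_levelPartition c, hFc⟩, ?_⟩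
    rintro L ⟨hL, rfl⟩
    exact hL.eq_of_permFace_eq (isOrderedPartition_levelPartition c) hFc
  · obtain ⟨σ, hσ⟩ := hL.exists_compatible
    let φ := (LinearEquiv.piRing ℝ ℝ (Fin m) ℝ).symm fun i => (blockIndex L i : ℝ)
    have hφ : BlockOrdered L fun i => φ (Pi.single i 1) := by
      simpa only [φ, piRing_symm_apply_single] using hL.blockOrdered_blockIndex
    exact ⟨⟨_, permVertex_mem_permFace hσ⟩, φ,
      (sep_permutohedron_forall_apply_le hL hφ).symm⟩

theorem stmt2 (m : ℕ) (hm : 1 ≤ m) :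
    (∀ F : Set (Fin m → ℝ), F.Nonempty →
      (∃ φ : (Fin m → ℝ) →ₗ[ℝ] ℝ,
        F = {x ∈ permutohedron m | ∀ y ∈ permutohedron m, φ y ≤ φ x}) →
      ∃! L : List (Finset (Fin m)), IsOrderedPartition m L ∧ F = permFace m L) ∧
    (∀ L : List (Finset (Fin m)), IsOrderedPartition m L →
      (permFace m L).Nonempty ∧
      ∃ φ : (Fin m → ℝ) →ₗ[ℝ] ℝ,
        permFace m L = {x ∈ permutohedron m | ∀ y ∈ permutohedron m, φ y ≤ φ x}) :=
  stmt2_general m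
end

section
/- For every simplicial complex K on the vertex set [m], the following two subsets of Perm^{m−1} coincide: (a) Perm^{m−1} minus the union, over all subsets I ∉ K and all ordered partitions (U_1 | ⋯ | U_p) of [m] with U_j = I for some j, of the relative (intrinsic) interiors of the faces F(U_1 | ⋯ | U_p); and (b) the union of the faces F(U_1 | ⋯ | U_p) over all ordered partitions of [m] all of whose parts U_j are simplices of K. -/
/-- A simplicial complex on the vertex set `[m]` (modelled as `Fin m`):
a collection of subsets closed under taking subsets and containing every singleton. -/
def IsSimplicialComplex (m : ℕ) (K : Set (Finset (Fin m))) : Prop :=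
  (∀ σ ∈ K, ∀ τ, τ ⊆ σ → τ ∈ K) ∧ (∀ i : Fin m, ({i} : Finset (Fin m)) ∈ K)

/-!
By Rado's theorem the permutohedron is the polytope `∑_{i ∈ S} x_i ≥ 1 + ⋯ + #S` (all `S`),
with equality for `S = [m]`. Strict supermodularity of `k ↦ 1 + ⋯ + k` makes the sets on which
equality holds at a point `x` (its tight sets) a chain, i.e. the prefix unions
`U_1 ∪ ⋯ ∪ U_j` of an ordered partition. The face `F(U_1 | ⋯ | U_p)` consists of the points at
which all these prefix unions are tight, and its relative interior of the points whose tight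
sets are exactly these prefix unions. So each point lies in the relative interior of the face
of its own chain, and a point of `F(L)` in the relative interior of `F(L')` forces `L'` to refine
`L`: every part of `L'` lies in a part of `L`, hence is a simplex when the parts of `L` are.
-/

open Finset

section PrefixUnion

variable {α : Type*} [DecidableEq α] {L : List (Finset α)}

def prefixUnion (L : List (Finset α)) (j : ℕ) : Finset α := (L.take j).foldr (· ∪ ·) ∅

lemma mem_foldr_union {a : α} :
    a ∈ L.foldr (· ∪ ·) ∅ ↔ ∃ U ∈ L, a ∈ U := by
  induction L with
  | nil => simp
  | cons U L ih => simp [ih]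

lemma card_foldr_union (hL : L.Pairwise Disjoint) :
    #(L.foldr (· ∪ ·) ∅) = (L.map card).sum := by
  induction L with
  | nil => rfl
  | cons U L ih =>
    rw [List.pairwise_cons] at hL
    rw [List.foldr_cons, List.map_cons, List.sum_cons, ← ih hL.2,
      card_union_of_disjoint (disjoint_left.2 fun a ha hL' => ?_)]
    obtain ⟨V, hV, haV⟩ := mem_foldr_union.1 hL'
    exact disjoint_left.1 (hL.1 V hV) ha haV

lemma mem_prefixUnion {j : ℕ} {a : α} :
    a ∈ prefixUnion L j ↔ ∃ k, ∃ hk : k < L.length, k < j ∧ a ∈ L[k] := by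
  simp only [prefixUnion, mem_foldr_union, List.mem_iff_getElem, List.length_take,
    List.getElem_take]
  constructor
  · rintro ⟨U, ⟨k, hk, rfl⟩, ha⟩
    exact ⟨k, by omega, by omega, ha⟩
  · rintro ⟨k, hk, hkj, ha⟩
    exact ⟨_, ⟨k, by omega, rfl⟩, ha⟩

@[simp]
lemma prefixUnion_zero (L : List (Finset α)) : prefixUnion L 0 = ∅ := rfl

lemma prefixUnion_of_length_le {j : ℕ} (h : L.length ≤ j) :
    prefixUnion L j = L.foldr (· ∪ ·) ∅ := by
  rw [prefixUnion, List.take_of_length_le h]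

lemma monotone_prefixUnion (L : List (Finset α)) : Monotone (prefixUnion L) := by
  intro j j' h a ha
  obtain ⟨k, hk, hkj, ha⟩ := mem_prefixUnion.1 ha
  exact mem_prefixUnion.2 ⟨k, hk, hkj.trans_le h, ha⟩

lemma prefixUnion_succ {j : ℕ} (h : j < L.length) :
    prefixUnion L (j + 1) = prefixUnion L j ∪ L[j] := by
  ext a
  simp only [mem_union, mem_prefixUnion]
  constructor
  · rintro ⟨k, hk, hkj, ha⟩
    obtain hkj | rfl := Nat.lt_succ_iff_lt_or_eq.1 hkj
    exacts [.inl ⟨k, hk, hkj, ha⟩, .inr ha]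
  · rintro (⟨k, hk, hkj, ha⟩ | ha)
    exacts [⟨k, hk, by omega, ha⟩, ⟨j, h, by omega, ha⟩]

lemma mem_prefixUnion_iff_of_mem_getElem (hL : L.Pairwise Disjoint) {j k : ℕ}
    (hk : k < L.length) {a : α} (ha : a ∈ L[k]) : a ∈ prefixUnion L j ↔ k < j := by
  refine ⟨fun h => ?_, fun h => mem_prefixUnion.2 ⟨k, hk, h, ha⟩⟩
  obtain ⟨k', hk', hk'j, ha'⟩ := mem_prefixUnion.1 h
  obtain hlt | rfl | hlt := lt_trichotomy k k'
  · exact (disjoint_left.1 (List.pairwise_iff_getElem.1 hL k k' hk hk' hlt) ha ha').elim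
  · exact hk'j
  · exact (disjoint_left.1 (List.pairwise_iff_getElem.1 hL k' k hk' hk hlt) ha' ha).elim

lemma disjoint_prefixUnion_getElem (hL : L.Pairwise Disjoint) {j : ℕ} (h : j < L.length) :
    Disjoint (prefixUnion L j) L[j] :=
  disjoint_right.2 fun _ ha hmem => (mem_prefixUnion_iff_of_mem_getElem hL h ha).1 hmem |>.false

lemma getElem_eq_prefixUnion_sdiff (hL : L.Pairwise Disjoint) {j : ℕ} (h : j < L.length) :
    L[j] = prefixUnion L (j + 1) \ prefixUnion L j := by
  rw [prefixUnion_succ h, union_sdiff_cancel_left (disjoint_prefixUnion_getElem hL h)]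

lemma foldr_union_append_singleton (L : List (Finset α)) (U : Finset α) :
    (L ++ [U]).foldr (· ∪ ·) ∅ = L.foldr (· ∪ ·) ∅ ∪ U := by
  induction L with
  | nil => simp
  | cons V L ih => simp [ih, union_assoc]

lemma prefixUnion_append_singleton_of_le {U : Finset α} {j : ℕ}
    (h : j ≤ L.length) : prefixUnion (L ++ [U]) j = prefixUnion L j := by
  rw [prefixUnion, List.take_append_of_le_length h, prefixUnion]

lemma range_prefixUnion_append_singleton (L : List (Finset α)) (U : Finset α) :
    Set.range (prefixUnion (L ++ [U])) =
      insert (L.foldr (· ∪ ·) ∅ ∪ U) (Set.range (prefixUnion L)) := by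
  have hlast : prefixUnion (L ++ [U]) (L.length + 1) = L.foldr (· ∪ ·) ∅ ∪ U := by
    rw [prefixUnion_of_length_le (by simp), foldr_union_append_singleton]
  ext S
  simp only [Set.mem_insert_iff, Set.mem_range]
  constructor
  · rintro ⟨j, rfl⟩
    by_cases hj : j ≤ L.length
    · exact .inr ⟨j, (prefixUnion_append_singleton_of_le hj).symm⟩
    · rw [← hlast, prefixUnion_of_length_le (by simp; omega),
        prefixUnion_of_length_le (by simp)]
      exact .inl rfl
  · rintro (rfl | ⟨j, rfl⟩)
    · exact ⟨_, hlast⟩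
    by_cases hj : j ≤ L.length
    · exact ⟨j, prefixUnion_append_singleton_of_le hj⟩
    · refine ⟨L.length, ?_⟩
      rw [prefixUnion_append_singleton_of_le le_rfl, prefixUnion_of_length_le le_rfl,
        prefixUnion_of_length_le (by omega)]

lemma exists_list_range_prefixUnion_eq {C : Finset (Finset α)}
    (hC : IsChain (· ⊆ ·) (C : Set (Finset α))) (h0 : ∅ ∈ C) {T : Finset α} (hT : T ∈ C)
    (hsub : ∀ S ∈ C, S ⊆ T) :
    ∃ L : List (Finset α), (∀ U ∈ L, U.Nonempty) ∧ L.Pairwise Disjoint ∧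
      L.foldr (· ∪ ·) ∅ = T ∧ Set.range (prefixUnion L) = C := by
  induction C using Finset.strongInduction generalizing T with
  | H C ih =>
  by_cases hT0 : T = ∅
  · subst hT0
    refine ⟨[], by simp, .nil, rfl, ?_⟩
    ext S
    simp only [Set.mem_range, mem_coe, prefixUnion, List.take_nil, List.foldr_nil,
      exists_const]
    exact ⟨fun h => h ▸ h0, fun hS => (subset_empty.1 (hsub S hS)).symm⟩
  have h0' : ∅ ∈ C.erase T := mem_erase.2 ⟨Ne.symm hT0, h0⟩
  obtain ⟨T', hT', hmax⟩ := (C.erase T).exists_max_image card ⟨∅, h0'⟩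
  have hsub' : ∀ S ∈ C.erase T, S ⊆ T' := by
    intro S hS
    obtain rfl | hne := eq_or_ne S T'
    · exact subset_rfl
    obtain h | h := hC (mem_of_mem_erase hS) (mem_of_mem_erase hT') hne
    · exact h
    · exact (eq_of_subset_of_card_le h (hmax S hS)).symm ▸ subset_rfl
  have hT'T : T' ⊂ T :=
    ssubset_of_subset_of_ne (hsub _ (mem_of_mem_erase hT')) (ne_of_mem_erase hT')
  obtain ⟨L, hne, hpw, hfold, hrange⟩ := ih _ (erase_ssubset hT)
    (hC.mono (coe_subset.2 (erase_subset _ _))) h0' hT' hsub'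
  refine ⟨L ++ [T \ T'], ?_, ?_, ?_, ?_⟩
  · simp only [List.mem_append, List.mem_singleton]
    rintro U (hU | rfl)
    exacts [hne U hU, sdiff_nonempty.2 hT'T.not_subset]
  · refine List.pairwise_append.2 ⟨hpw, List.pairwise_singleton _ _, fun U hU V hV => ?_⟩
    rw [List.mem_singleton.1 hV]
    exact disjoint_sdiff.mono_left
      (hfold ▸ fun a ha => mem_foldr_union.2 ⟨U, hU, ha⟩)
  · rw [foldr_union_append_singleton, hfold, union_sdiff_of_subset hT'T.subset]
  · rw [range_prefixUnion_append_singleton, hfold, union_sdiff_of_subset hT'T.subset, hrange,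
      coe_erase, Set.insert_sdiff_singleton, Set.insert_eq_of_mem (mem_coe.2 hT)]

end PrefixUnion

namespace Permutohedron

def tri (k : ℕ) : ℕ := ∑ i ∈ range k, (i + 1)

lemma tri_succ (k : ℕ) : tri (k + 1) = tri k + (k + 1) := sum_range_succ _ _

lemma tri_mul_two (k : ℕ) : tri k * 2 = k * (k + 1) := by
  induction k with
  | zero => rfl
  | succ k ih => rw [tri_succ]; nlinarith

lemma tri_add_tri_lt {a b c u : ℕ} (ha : c < a) (hb : c < b) (h : u + c = a + b) :
    tri a + tri b < tri u + tri c := by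
  nlinarith [tri_mul_two a, tri_mul_two b, tri_mul_two c, tri_mul_two u,
    Nat.mul_lt_mul_of_lt_of_lt (Nat.sub_pos_of_lt ha) (Nat.sub_pos_of_lt hb)]

lemma tri_card_le_sum (s : Finset ℕ) : tri #s ≤ ∑ i ∈ s, (i + 1) := by
  induction s using Finset.induction_on_max with
  | empty => rfl
  | insert a s has ih =>
    have : #s ≤ a := by simpa using card_le_card fun x hx => mem_range.2 (has x hx)
    rw [sum_insert fun h => (has a h).false, card_insert_of_notMem fun h => (has a h).false,
      tri_succ]
    omega

lemma eq_range_of_sum_eq_tri {s : Finset ℕ} (h : ∑ i ∈ s, (i + 1) = tri #s) :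
    s = range #s := by
  induction s using Finset.induction_on_max with
  | empty => rfl
  | insert a s has ih =>
    have ha : a ∉ s := fun h => (has a h).false
    have : #s ≤ a := by simpa using card_le_card fun x hx => mem_range.2 (has x hx)
    rw [sum_insert ha, card_insert_of_notMem ha, tri_succ] at h
    have := tri_card_le_sum s
    rw [card_insert_of_notMem ha, range_add_one, ← ih (by omega), show a = #s by omega]

variable {m : ℕ} {L : List (Finset (Fin m))} {σ : Equiv.Perm (Fin m)}

def coordSum (S : Finset (Fin m)) : (Fin m → ℝ) →ₗ[ℝ] ℝ := ∑ i ∈ S, LinearMap.proj i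

@[simp]
lemma coordSum_apply (S : Finset (Fin m)) (x : Fin m → ℝ) : coordSum S x = ∑ i ∈ S, x i := by
  simp [coordSum]

lemma continuous_coordSum (S : Finset (Fin m)) : Continuous (coordSum S) :=
  LinearMap.continuous_of_finiteDimensional _

def Tight (x : Fin m → ℝ) (S : Finset (Fin m)) : Prop := coordSum S x = tri #S

def permutohedronIneq (m : ℕ) : Set (Fin m → ℝ) :=
  {x | (∀ S, (tri #S : ℝ) ≤ coordSum S x) ∧ Tight x univ}

lemma tight_empty (x : Fin m → ℝ) : Tight x ∅ := by simp [Tight, tri]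

lemma convex_permutohedronIneq : Convex ℝ (permutohedronIneq m) := by
  intro x hx y hy a b ha hb hab
  refine ⟨fun S => ?_, ?_⟩
  · have := hx.1 S; have := hy.1 S
    simp only [map_add, map_smul, smul_eq_mul]
    nlinarith
  · rw [Tight, map_add, map_smul, map_smul, smul_eq_mul, smul_eq_mul,
      (hx.2 : coordSum univ x = _), (hy.2 : coordSum univ y = _), ← add_mul, hab, one_mul]

lemma isClosed_permutohedronIneq : IsClosed (permutohedronIneq m) := by
  simp only [permutohedronIneq, Tight, Set.ofPred_and, Set.ofPred_forall]
  exact (isClosed_iInter fun S => isClosed_le continuous_const (continuous_coordSum S)).inter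
    (isClosed_eq (continuous_coordSum _) continuous_const)

lemma isCompact_permutohedronIneq : IsCompact (permutohedronIneq m) := by
  refine (isCompact_univ_pi fun _ => isCompact_Icc (a := (0 : ℝ)) (b := tri m)).of_isClosed_subset
    isClosed_permutohedronIneq fun x hx i _ => ?_
  have hpos : ∀ k, 1 ≤ x k := fun k => by simpa [tri] using hx.1 {k}
  have hsum : ∑ k, x k = tri m := by simpa [Tight] using hx.2
  exact ⟨(hpos i).trans' zero_le_one,
    hsum ▸ single_le_sum (fun k _ => (hpos k).trans' zero_le_one) (mem_univ i)⟩

lemma coordSum_permVertex (S : Finset (Fin m)) (σ : Equiv.Perm (Fin m)) :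
    coordSum S (permVertex m σ) = ((∑ k ∈ S.image fun i => (σ i : ℕ), (k + 1) : ℕ) : ℝ) := by
  rw [sum_image fun _ _ _ _ h => σ.injective (Fin.val_injective h)]
  simp [permVertex]

lemma card_image_perm (S : Finset (Fin m)) (σ : Equiv.Perm (Fin m)) :
    #(S.image fun i => (σ i : ℕ)) = #S :=
  card_image_of_injective S (Fin.val_injective.comp σ.injective)

lemma tri_le_coordSum_permVertex (S : Finset (Fin m)) (σ : Equiv.Perm (Fin m)) :
    (tri #S : ℝ) ≤ coordSum S (permVertex m σ) := by
  rw [coordSum_permVertex, ← card_image_perm S σ]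
  exact_mod_cast tri_card_le_sum _

lemma tight_permVertex_iff {S : Finset (Fin m)} :
    Tight (permVertex m σ) S ↔ ∀ i, i ∈ S ↔ (σ i : ℕ) < #S := by
  rw [Tight, coordSum_permVertex, Nat.cast_inj]
  have hcard := card_image_perm S σ
  constructor
  · intro h i
    have hrange := eq_range_of_sum_eq_tri (by rwa [hcard])
    rw [hcard] at hrange
    rw [← mem_range, ← hrange]
    exact ⟨mem_image_of_mem _, fun hi => by
      obtain ⟨i', hi', h'⟩ := mem_image.1 hi
      rwa [σ.injective (Fin.val_injective h')] at hi'⟩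
  · intro h
    suffices S.image (fun i => (σ i : ℕ)) = range #S by rw [this]; rfl
    ext k
    simp only [mem_image, mem_range]
    refine ⟨fun ⟨i, hi, hk⟩ => hk ▸ (h i).1 hi, fun hk => ?_⟩
    have hkm : k < m := hk.trans_le (card_le_univ S |>.trans_eq (Fintype.card_fin m))
    exact ⟨σ.symm ⟨k, hkm⟩, (h _).2 (by simpa using hk), by simp⟩

lemma permVertex_mem_permutohedronIneq (σ : Equiv.Perm (Fin m)) :
    permVertex m σ ∈ permutohedronIneq m :=
  ⟨fun S => tri_le_coordSum_permVertex S σ, tight_permVertex_iff.2 fun i => by simp⟩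

lemma Tight.of_mem_openSegment {x₁ x₂ x : Fin m → ℝ} {S : Finset (Fin m)}
    (h₁ : x₁ ∈ permutohedronIneq m) (h₂ : x₂ ∈ permutohedronIneq m)
    (hx : x ∈ openSegment ℝ x₁ x₂) (hS : Tight x S) : Tight x₁ S := by
  obtain ⟨a, b, ha, hb, hab, rfl⟩ := hx
  have := h₁.1 S; have := h₂.1 S
  rw [Tight, map_add, map_smul, map_smul, smul_eq_mul, smul_eq_mul] at hS
  rw [Tight]
  nlinarith

/-- Two incomparable tight sets would violate the inequality for their union or intersection,
by strict supermodularity of `tri`. -/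
lemma isChain_tight {x : Fin m → ℝ} (hx : x ∈ permutohedronIneq m) :
    IsChain (· ⊆ ·) {S | Tight x S} := by
  intro S (hS : Tight x S) T (hT : Tight x T) _
  by_contra h
  rw [not_or] at h
  have hS' : #(S ∩ T) < #S :=
    card_lt_card ⟨inter_subset_left, fun h' => h.1 (h'.trans inter_subset_right)⟩
  have hT' : #(S ∩ T) < #T :=
    card_lt_card ⟨inter_subset_right, fun h' => h.2 (h'.trans inter_subset_left)⟩
  have hlt := tri_add_tri_lt hS' hT' (card_union_add_card_inter S T)
  have hsum : ∑ i ∈ S ∪ T, x i + ∑ i ∈ S ∩ T, x i = ∑ i ∈ S, x i + ∑ i ∈ T, x i :=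
    sum_union_inter
  have hU := hx.1 (S ∪ T); have hI := hx.1 (S ∩ T)
  simp only [Tight, coordSum_apply] at hS hT hU hI
  have : (tri #S : ℝ) + tri #T < tri #(S ∪ T) + tri #(S ∩ T) := by exact_mod_cast hlt
  linarith

open Filter Topology in
lemma eventually_mem_permutohedronIneq {x : Fin m → ℝ} (hx : x ∈ permutohedronIneq m) :
    ∀ᶠ z in 𝓝 x, (∀ S, Tight x S → Tight z S) → z ∈ permutohedronIneq m := by
  have h : ∀ S, ∀ᶠ z in 𝓝 x, ¬ Tight x S → (tri #S : ℝ) < coordSum S z := fun S => by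
    by_cases hS : Tight x S
    · exact .of_forall fun _ h => (h hS).elim
    · exact ((continuous_coordSum S).tendsto x).eventually
        (lt_mem_nhds ((hx.1 S).lt_of_ne (Ne.symm hS))) |>.mono fun _ h _ => h
  filter_upwards [eventually_all.2 h] with z hz htight
  refine ⟨fun S => ?_, htight _ hx.2⟩
  by_cases hS : Tight x S
  · exact (htight S hS).ge
  · exact (hz S hS).le

lemma card_prefixUnion (hL : L.Pairwise Disjoint) (j : ℕ) :
    #(prefixUnion L j) = partialCard m L j :=
  card_foldr_union (hL.sublist (List.take_sublist _ _))

lemma compatible_iff (hL : L.Pairwise Disjoint) :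
    Compatible m L σ ↔ ∀ j i, i ∈ prefixUnion L j ↔ (σ i : ℕ) < #(prefixUnion L j) := by
  simp only [Compatible, ← card_prefixUnion hL, List.get_eq_getElem]
  constructor
  · intro hσ j i
    induction j with
    | zero => simp
    | succ j ih =>
      by_cases hj : j < L.length
      · have := card_le_card (monotone_prefixUnion L (Nat.le_add_right j 1))
        have hj' : i ∈ L[j] ↔ #(prefixUnion L j) ≤ σ i ∧ σ i < #(prefixUnion L (j + 1)) :=
          hσ ⟨j, hj⟩ i
        rw [prefixUnion_succ hj, mem_union, ih, hj', ← prefixUnion_succ hj]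
        omega
      · rwa [prefixUnion_of_length_le (by omega : L.length ≤ j + 1),
          ← prefixUnion_of_length_le (not_lt.1 hj)]
  · intro h j i
    rw [getElem_eq_prefixUnion_sdiff hL j.isLt, mem_sdiff, h, h]
    omega

lemma exists_superset_of_range_prefixUnion_subset {L' : List (Finset (Fin m))}
    (hL : IsOrderedPartition m L) (hL' : IsOrderedPartition m L')
    (h : Set.range (prefixUnion L) ⊆ Set.range (prefixUnion L')) {U : Finset (Fin m)}
    (hU : U ∈ L') : ∃ V ∈ L, U ⊆ V := by
  obtain ⟨j, hj, rfl⟩ := List.mem_iff_getElem.1 hU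
  obtain ⟨a, ha⟩ := hL'.1 _ hU
  obtain ⟨V, hV, haV⟩ := mem_foldr_union.1 (hL.2.2 ▸ mem_univ a)
  obtain ⟨k, hk, rfl⟩ := List.mem_iff_getElem.1 hV
  refine ⟨L[k], hV, ?_⟩
  obtain ⟨r, hr⟩ := h ⟨k, rfl⟩
  obtain ⟨s, hs⟩ := h ⟨k + 1, rfl⟩
  have hak := fun t => mem_prefixUnion_iff_of_mem_getElem (j := t) hL.2.1 hk haV
  have haj := fun t => mem_prefixUnion_iff_of_mem_getElem (j := t) hL'.2.1 hj ha
  have hrj : r ≤ j := by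
    have := haj r; rw [hr, hak] at this; omega
  have hjs : j < s := by
    rw [← haj, hs, hak]; omega
  rw [getElem_eq_prefixUnion_sdiff hL.2.1 hk, getElem_eq_prefixUnion_sdiff hL'.2.1 hj, ← hr,
    ← hs]
  exact sdiff_subset_sdiff (monotone_prefixUnion _ hjs) (monotone_prefixUnion _ hrj)

lemma compatible_iff_tight (hL : L.Pairwise Disjoint) :
    Compatible m L σ ↔ ∀ j, Tight (permVertex m σ) (prefixUnion L j) := by
  simp only [compatible_iff hL, tight_permVertex_iff]

lemma exists_isOrderedPartition_tight_iff {x : Fin m → ℝ} (hx : x ∈ permutohedronIneq m) :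
    ∃ L, IsOrderedPartition m L ∧ ∀ S, Tight x S ↔ S ∈ Set.range (prefixUnion L) := by
  classical
  obtain ⟨L, hne, hpw, hfold, hrange⟩ := exists_list_range_prefixUnion_eq
    (C := univ.filter (Tight x ·)) ((isChain_tight hx).mono fun S hS => (mem_filter.1 hS).2)
    (mem_filter.2 ⟨mem_univ _, tight_empty x⟩) (mem_filter.2 ⟨mem_univ _, hx.2⟩)
    fun S _ => subset_univ S
  exact ⟨L, ⟨hne, hpw, hfold⟩, fun S => by simp [hrange]⟩

open Filter Topology in
/-- At an extreme point, every two coordinates are separated by a tight set: otherwise one can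
move along `e_i - e_i'` in both directions without leaving the polytope. -/
lemma eq_of_mem_extremePoints {y : Fin m → ℝ} (hy : y ∈ (permutohedronIneq m).extremePoints ℝ)
    {i i' : Fin m} (h : ∀ S, Tight y S → (i ∈ S ↔ i' ∈ S)) : i = i' := by
  by_contra hne
  set d : Fin m → ℝ := Pi.single i 1 - Pi.single i' 1
  have hd : ∀ S, Tight y S → ∀ s : ℝ, Tight (y + s • d) S := by
    intro S hS s
    have : coordSum S d = 0 := by simp [d, sum_sub_distrib, sum_pi_single', h S hS]
    rwa [Tight, map_add, map_smul, this, smul_zero, add_zero]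
  have hev : ∀ᶠ s in 𝓝 (0 : ℝ), y + s • d ∈ permutohedronIneq m := by
    have hcont : Tendsto (fun s : ℝ => y + s • d) (𝓝 0) (𝓝 y) := by
      simpa using ((by fun_prop : Continuous fun s : ℝ => y + s • d).tendsto 0)
    exact (hcont.eventually (eventually_mem_permutohedronIneq hy.1)).mono
      fun s hs => hs fun S hS => hd S hS s
  have hev' := hev.and ((continuous_neg.tendsto' 0 0 neg_zero).eventually hev)
  obtain ⟨s, ⟨hs₁, hs₂⟩, hs⟩ :=
    ((hev'.filter_mono (nhdsWithin_le_nhds (s := Set.Ioi 0))).and self_mem_nhdsWithin).exists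
  have hseg : y ∈ openSegment ℝ (y + s • d) (y + (-s) • d) :=
    ⟨1 / 2, 1 / 2, by norm_num, by norm_num, by norm_num, by module⟩
  have := congrFun ((mem_extremePoints.1 hy).2 _ hs₁ _ hs₂ hseg).1 i
  simp [d, hne] at this
  exact (Set.mem_Ioi.1 hs).ne' this

lemma exists_perm_eq_permVertex {y : Fin m → ℝ} (h : ∀ i, ∃ k : Fin m, y i = (k : ℕ) + 1)
    (hinj : Function.Injective y) : ∃ σ, y = permVertex m σ := by
  choose f hf using h
  have hf_inj : Function.Injective f := fun a b hab => hinj (by rw [hf, hf, hab])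
  exact ⟨Equiv.ofBijective f hf_inj.bijective_of_finite, funext hf⟩

lemma coord_eq_card_prefixUnion_add_one (hL : L.Pairwise Disjoint) {y : Fin m → ℝ}
    (hy : ∀ j, Tight y (prefixUnion L j)) {k : ℕ} (hk : k < L.length) {i : Fin m} (hki : L[k] = {i}) :
    y i = #(prefixUnion L k) + 1 := by
  have hdisj := disjoint_prefixUnion_getElem hL hk
  have h₁ := hy k
  have h₂ := hy (k + 1)
  rw [hki] at hdisj
  rw [prefixUnion_succ hk, hki] at h₂
  simp only [Tight, coordSum_apply, sum_union hdisj, sum_singleton, card_union_of_disjoint hdisj,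
    card_singleton, tri_succ, Nat.cast_add, Nat.cast_one] at h₁ h₂
  linarith

lemma exists_eq_permVertex_of_mem_extremePoints {y : Fin m → ℝ}
    (hy : y ∈ (permutohedronIneq m).extremePoints ℝ) : ∃ σ, y = permVertex m σ := by
  obtain ⟨L, hL, hT⟩ := exists_isOrderedPartition_tight_iff hy.1
  have hpart : ∀ i, ∃ k, ∃ hk : k < L.length, L[k] = {i} := by
    intro i
    obtain ⟨U, hU, hiU⟩ := mem_foldr_union.1 (hL.2.2 ▸ mem_univ i)
    obtain ⟨k, hk, rfl⟩ := List.mem_iff_getElem.1 hU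
    refine ⟨k, hk, eq_singleton_iff_unique_mem.2 ⟨hiU, fun i' hi' => ?_⟩⟩
    refine (eq_of_mem_extremePoints hy fun S hS => ?_).symm
    obtain ⟨j, rfl⟩ := (hT S).1 hS
    rw [mem_prefixUnion_iff_of_mem_getElem hL.2.1 hk hiU,
      mem_prefixUnion_iff_of_mem_getElem hL.2.1 hk hi']
  choose k hk hki using hpart
  have hy_eq i :=
    coord_eq_card_prefixUnion_add_one hL.2.1 (fun j => (hT _).2 ⟨j, rfl⟩) (hk i) (hki i)
  have hcard i : #(prefixUnion L (k i + 1)) = #(prefixUnion L (k i)) + 1 := by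
    rw [prefixUnion_succ (hk i), hki i,
      card_union_of_disjoint (hki i ▸ disjoint_prefixUnion_getElem hL.2.1 (hk i)), card_singleton]
  refine exists_perm_eq_permVertex (fun i => ⟨⟨#(prefixUnion L (k i)), ?_⟩, hy_eq i⟩)
    fun i i' h => ?_
  · have := (card_le_univ (prefixUnion L (k i + 1))).trans_eq (Fintype.card_fin m)
    rw [hcard] at this
    omega
  · rw [hy_eq, hy_eq, add_left_inj, Nat.cast_inj] at h
    have hkk : k i = k i' := by
      by_contra hne
      obtain hlt | hlt := lt_or_gt_of_ne hne
      · have := card_le_card (monotone_prefixUnion L hlt); rw [hcard] at this; omega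
      · have := card_le_card (monotone_prefixUnion L hlt); rw [hcard] at this; omega
    have := hki i
    simp only [hkk, hki i', singleton_inj] at this
    exact this.symm

lemma isCompact_permutohedron : IsCompact (permutohedron m) := by
  refine ((Set.finite_range (permVertex m)).subset ?_).isCompact_convexHull ℝ
  rintro _ ⟨σ, rfl⟩
  exact ⟨σ, rfl⟩

/-- Rado's theorem. -/
theorem permutohedron_eq_permutohedronIneq : permutohedron m = permutohedronIneq m := by
  refine (convexHull_min ?_ convex_permutohedronIneq).antisymm ?_
  · rintro _ ⟨σ, rfl⟩
    exact permVertex_mem_permutohedronIneq σ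
  · rw [← closure_convexHull_extremePoints isCompact_permutohedronIneq convex_permutohedronIneq]
    refine closure_minimal (convexHull_mono fun y hy => ?_) isCompact_permutohedron.isClosed
    obtain ⟨σ, rfl⟩ := exists_eq_permVertex_of_mem_extremePoints hy
    exact ⟨σ, rfl⟩

lemma mem_permFace_iff (hL : L.Pairwise Disjoint) {x : Fin m → ℝ} :
    x ∈ permFace m L ↔ x ∈ permutohedron m ∧ ∀ j, Tight x (prefixUnion L j) := by
  set B := permutohedron m ∩ ⋂ j, {x | Tight x (prefixUnion L j)}
  suffices permFace m L = B by simp [this, B]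
  have hconv : Convex ℝ B := (convex_convexHull ℝ _).inter
    (convex_iInter fun j => convex_hyperplane (coordSum _).isLinear _)
  refine (convexHull_min ?_ hconv).antisymm ?_
  · rintro _ ⟨σ, hσ, rfl⟩
    exact ⟨subset_convexHull ℝ _ ⟨σ, rfl⟩, Set.mem_iInter.2 ((compatible_iff_tight hL).1 hσ)⟩
  -- `B` is a face of the permutohedron, so by Krein–Milman it is the hull of its vertices.
  have hP := permutohedron_eq_permutohedronIneq (m := m)
  have hB : IsExtreme ℝ (permutohedron m) B := by
    refine ⟨Set.inter_subset_left, fun x₁ h₁ x₂ h₂ x hx hseg =>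
      ⟨h₁, Set.mem_iInter.2 fun j => ?_⟩⟩
    exact (Set.mem_iInter.1 hx.2 j).of_mem_openSegment (hP ▸ h₁) (hP ▸ h₂) hseg
  have hBc : IsCompact B := isCompact_permutohedron.inter_right
    (isClosed_iInter fun j => isClosed_eq (continuous_coordSum _) continuous_const)
  rw [← closure_convexHull_extremePoints hBc hconv]
  refine closure_minimal (convexHull_mono fun y hy => ?_) ?_
  · obtain ⟨σ, rfl⟩ := extremePoints_convexHull_subset (hB.extremePoints_subset_extremePoints hy)
    exact ⟨σ, (compatible_iff_tight hL).2 (Set.mem_iInter.1 hy.1.2), rfl⟩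
  · refine ((Set.finite_range (permVertex m)).subset ?_).isClosed_convexHull ℝ
    rintro _ ⟨σ, -, rfl⟩
    exact ⟨σ, rfl⟩

lemma compatible_trans_swap (hσ : Compatible m L σ) {a b : Fin m}
    (h : ∀ j, partialCard m L j ≤ (a : ℕ) ↔ partialCard m L j ≤ (b : ℕ)) :
    Compatible m L (σ.trans (Equiv.swap a b)) := by
  intro j i
  have h₁ := h j
  have h₂ := h (j + 1)
  rw [hσ j i, Equiv.trans_apply, Equiv.swap_apply_def]
  split_ifs with ha hb
  · rw [ha]; omega
  · rw [hb]; omega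
  · rfl

/-- If `#S` is not a partial sum of the part sizes, positions `#S - 1` and `#S` lie in the same
block, and swapping them moves a vertex out of `S`. -/
lemma exists_compatible_not_tight (hL : IsOrderedPartition m L)
    {σ₀ : Equiv.Perm (Fin m)} (hσ₀ : Compatible m L σ₀) {S : Finset (Fin m)}
    (hS : S ∉ Set.range (prefixUnion L)) :
    ∃ σ, Compatible m L σ ∧ ¬ Tight (permVertex m σ) S := by
  by_contra! h
  have hmem σ (hσ : Compatible m L σ) i := tight_permVertex_iff.1 (h σ hσ) i
  by_cases hc : ∃ j, partialCard m L j = #S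
  · obtain ⟨j, hj⟩ := hc
    refine hS ⟨j, ext fun i => ?_⟩
    rw [(compatible_iff hL.2.1).1 hσ₀ j i, card_prefixUnion hL.2.1, hj, hmem σ₀ hσ₀]
  push Not at hc
  have hm : partialCard m L L.length = m := by
    rw [← card_prefixUnion hL.2.1, prefixUnion_of_length_le le_rfl, hL.2.2, card_univ,
      Fintype.card_fin]
  have hS0 : #S ≠ 0 := fun h0 => hc 0 (by rw [h0]; rfl)
  have hSm : #S < m := by
    have h₁ := (card_le_univ S).trans_eq (Fintype.card_fin m)
    have h₂ := hc L.length
    omega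
  have hσ₁ := compatible_trans_swap hσ₀ (a := ⟨#S - 1, by omega⟩) (b := ⟨#S, hSm⟩) fun j => by
    have := hc j
    dsimp only
    omega
  have h₀ := hmem σ₀ hσ₀ (σ₀.symm ⟨#S - 1, by omega⟩)
  have h₁ := hmem _ hσ₁ (σ₀.symm ⟨#S - 1, by omega⟩)
  simp only [Equiv.apply_symm_apply, Equiv.trans_apply, Equiv.swap_apply_left] at h₀ h₁
  rw [h₀] at h₁
  omega

open Filter Topology in
lemma exists_mem_openSegment_of_mem_intrinsicInterior {E : Type*} [NormedAddCommGroup E]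
    [NormedSpace ℝ E] {s : Set E} {x y : E} (hx : x ∈ intrinsicInterior ℝ s) (hy : y ∈ s) :
    ∃ z ∈ s, x ∈ openSegment ℝ y z := by
  obtain ⟨p, hp, rfl⟩ := mem_intrinsicInterior.1 hx
  have hys := subset_affineSpan ℝ s hy
  let γ : ℝ → affineSpan ℝ s := fun t => ⟨t • ((p : E) - y) + p,
    AffineSubspace.smul_vsub_vadd_mem _ t p.2 hys p.2⟩
  have hγ : Continuous γ := Continuous.subtype_mk (by fun_prop) _
  have hγ0 : γ 0 = p := Subtype.ext (by simp [γ])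
  have hev : ∀ᶠ t in 𝓝 (0 : ℝ), γ t ∈ interior (((↑) : affineSpan ℝ s → E) ⁻¹' s) :=
    hγ.continuousAt.preimage_mem_nhds (hγ0 ▸ isOpen_interior.mem_nhds hp)
  obtain ⟨t, ht, htpos⟩ :=
    ((hev.filter_mono (nhdsWithin_le_nhds (s := Set.Ioi 0))).and self_mem_nhdsWithin).exists
  have htpos : 0 < t := htpos
  refine ⟨_, interior_subset (s := ((↑) : affineSpan ℝ s → E) ⁻¹' s) ht, t / (1 + t),
    1 / (1 + t), by positivity, by positivity, by field_simp; ring, ?_⟩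
  have : 1 + t ≠ 0 := by positivity
  simp only [γ]
  match_scalars <;> field_simp <;> ring

lemma mem_intrinsicInterior_permFace_iff (hL : IsOrderedPartition m L)
    {x : Fin m → ℝ} : x ∈ intrinsicInterior ℝ (permFace m L) ↔
      x ∈ permutohedron m ∧ ∀ S, Tight x S ↔ S ∈ Set.range (prefixUnion L) := by
  have hP := permutohedron_eq_permutohedronIneq (m := m)
  constructor
  · intro hx
    have hxF := (mem_permFace_iff hL.2.1).1 (intrinsicInterior_subset hx)
    refine ⟨hxF.1, fun S => ⟨fun hS => ?_, by rintro ⟨j, rfl⟩; exact hxF.2 j⟩⟩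
    by_contra hSL
    obtain ⟨_, σ₀, hσ₀, rfl⟩ := convexHull_nonempty_iff.1 ⟨x, intrinsicInterior_subset hx⟩
    obtain ⟨σ, hσ, hnt⟩ := exists_compatible_not_tight hL hσ₀ hSL
    obtain ⟨z, hz, hseg⟩ :=
      exists_mem_openSegment_of_mem_intrinsicInterior hx (subset_convexHull ℝ _ ⟨σ, hσ, rfl⟩)
    exact hnt (hS.of_mem_openSegment (permVertex_mem_permutohedronIneq σ)
      (hP ▸ ((mem_permFace_iff hL.2.1).1 hz).1) hseg)
  · rintro ⟨hxP, hT⟩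
    have hxF : x ∈ permFace m L := (mem_permFace_iff hL.2.1).2 ⟨hxP, fun j => (hT _).2 ⟨j, rfl⟩⟩
    have hspan : ∀ z ∈ affineSpan ℝ (permFace m L), ∀ j, Tight z (prefixUnion L j) :=
      fun z hz j => AffineMap.eqOn_affineSpan (f := (coordSum (prefixUnion L j)).toAffineMap)
        (g := AffineMap.const ℝ _ (tri #(prefixUnion L j) : ℝ))
        (fun y hy => ((mem_permFace_iff hL.2.1).1 hy).2 j) hz
    refine mem_intrinsicInterior.2
      ⟨⟨x, subset_affineSpan ℝ _ hxF⟩, mem_interior_iff_mem_nhds.2 ?_, rfl⟩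
    filter_upwards [(continuous_subtype_val.tendsto _).eventually
      (eventually_mem_permutohedronIneq (hP ▸ hxP))] with z hz
    refine (mem_permFace_iff hL.2.1).2 ⟨hP ▸ hz fun S hS => ?_, hspan z z.2⟩
    obtain ⟨j, rfl⟩ := (hT S).1 hS
    exact hspan z z.2 j

end Permutohedron

open Permutohedron in
theorem stmt10_general (m : ℕ) (K : Set (Finset (Fin m)))
    (hK : IsSimplicialComplex m K) :
    permutohedron m \
      (⋃ I ∈ {I : Finset (Fin m) | I ∉ K},
        ⋃ L ∈ {L : List (Finset (Fin m)) |
            IsOrderedPartition m L ∧ ∃ j : Fin L.length, L.get j = I},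
          intrinsicInterior ℝ (permFace m L)) =
    ⋃ L ∈ {L : List (Finset (Fin m)) |
        IsOrderedPartition m L ∧ ∀ U ∈ L, U ∈ K}, permFace m L := by
  ext x
  simp only [Set.mem_sdiff, Set.mem_iUnion, Set.mem_ofPred_eq, exists_prop, not_exists, not_and]
  constructor
  · rintro ⟨hx, hbad⟩
    obtain ⟨L, hL, hT⟩ :=
      exists_isOrderedPartition_tight_iff (permutohedron_eq_permutohedronIneq ▸ hx)
    have hrel := (mem_intrinsicInterior_permFace_iff hL).2 ⟨hx, hT⟩
    refine ⟨L, ⟨hL, fun U hU => ?_⟩, intrinsicInterior_subset hrel⟩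
    by_contra hUK
    obtain ⟨j, hj, rfl⟩ := List.mem_iff_getElem.1 hU
    exact hbad _ hUK L ⟨hL, ⟨j, hj⟩, rfl⟩ hrel
  · rintro ⟨L, ⟨hL, hLK⟩, hx⟩
    have hxF := (mem_permFace_iff hL.2.1).1 hx
    refine ⟨hxF.1, fun I hI L' ⟨hL', j, hj⟩ hrel => hI ?_⟩
    have hT := ((mem_intrinsicInterior_permFace_iff hL').1 hrel).2
    obtain ⟨V, hV, hIV⟩ := exists_superset_of_range_prefixUnion_subset hL hL'
      (by rintro _ ⟨k, rfl⟩; exact (hT _).1 (hxF.2 k)) (hj ▸ L'.get_mem j)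
    exact hK.1 V (hLK V hV) I hIV

theorem stmt10 (m : ℕ) (hm : 1 ≤ m) (K : Set (Finset (Fin m)))
    (hK : IsSimplicialComplex m K) :
    permutohedron m \
      (⋃ I ∈ {I : Finset (Fin m) | I ∉ K},
        ⋃ L ∈ {L : List (Finset (Fin m)) |
            IsOrderedPartition m L ∧ ∃ j : Fin L.length, L.get j = I},
          intrinsicInterior ℝ (permFace m L)) =
    ⋃ L ∈ {L : List (Finset (Fin m)) |
        IsOrderedPartition m L ∧ ∀ U ∈ L, U ∈ K}, permFace m L :=
  stmt10_general m K hK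
end

section
/- Let (U_1 | ⋯ | U_p) be an ordered partition of [m] and set σ = {i : 1 ≤ i ≤ m−1 and {i, i+1} ⊆ U_j for some j}. Then |σ| ≤ m − p, and equality |σ| = m − p holds if and only if every part U_j is an interval of consecutive integers, i.e., U_j = {a_j, a_j + 1, …, a_j + |U_j| − 1} for some a_j ∈ [m]. -/
/-- The set `σ = {i : {i, i+1} ⊆ U_j for some j}` (in 0-based form: `i` and `i+1`
lie in the same part, with `i+1 ≤ m-1`). -/
noncomputable def sigmaSet (m : ℕ) (L : List (Finset (Fin m))) : Finset (Fin m) := by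
  classical
  exact Finset.univ.filter (fun i : Fin m =>
    ∃ hi : i.val + 1 < m, ∃ j : Fin L.length,
      i ∈ L.get j ∧ (⟨i.val + 1, hi⟩ : Fin m) ∈ L.get j)

/-!
Within a part `U`, the elements whose successor also lies in `U` miss at least the maximum of
`U`, so there are at most `|U| - 1` of them; there are exactly `|U| - 1` iff every element but
the maximum has its successor in `U`, i.e. iff `U` is an interval. Since `σ` is the disjoint
union of these sets over the parts, summing over the `p` parts gives `|σ| ≤ m - p`, with
equality iff every part is an interval.
-/

open Finset

namespace Finset

variable {S : Finset ℕ}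

theorem filter_add_one_mem_subset_erase_max' (hS : S.Nonempty) :
    S.filter (· + 1 ∈ S) ⊆ S.erase (S.max' hS) := fun x hx => by
  rw [mem_filter] at hx
  exact mem_erase.2 ⟨fun h => by simpa [h] using S.le_max' _ hx.2, hx.1⟩

theorem card_filter_add_one_mem_lt (hS : S.Nonempty) : #(S.filter (· + 1 ∈ S)) < #S :=
  (card_le_card (filter_add_one_mem_subset_erase_max' hS)).trans_lt
    (card_erase_lt_of_mem (S.max'_mem hS))

theorem Icc_subset_of_add_one_mem {a b : ℕ} (ha : a ∈ S) (hS : ∀ x ∈ S, x < b → x + 1 ∈ S) :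
    Icc a b ⊆ S := by
  intro x hx
  obtain ⟨hax, hxb⟩ := mem_Icc.1 hx
  induction x, hax using Nat.le_induction with
  | base => exact ha
  | succ n _ ih => exact hS n (ih (mem_Icc.2 ⟨‹_›, by omega⟩) (by omega)) (by omega)

theorem exists_eq_Ico_of_card_filter_add_one_mem (hS : S.Nonempty)
    (h : #(S.filter (· + 1 ∈ S)) + 1 = #S) : ∃ a, S = Ico a (a + #S) := by
  have hfilter : S.filter (· + 1 ∈ S) = S.erase (S.max' hS) :=
    eq_of_subset_of_card_le (filter_add_one_mem_subset_erase_max' hS)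
      (by rw [card_erase_of_mem (S.max'_mem hS)]; omega)
  have hIcc : S = Icc (S.min' hS) (S.max' hS) := by
    refine Subset.antisymm (fun x hx => mem_Icc.2 ⟨S.min'_le x hx, S.le_max' x hx⟩)
      (Icc_subset_of_add_one_mem (S.min'_mem hS) fun x hx hlt => ?_)
    have : x ∈ S.filter (· + 1 ∈ S) := hfilter ▸ mem_erase.2 ⟨hlt.ne, hx⟩
    exact (mem_filter.1 this).2
  generalize S.min' hS = a, S.max' hS = b at hIcc
  subst hIcc
  have hab := nonempty_Icc.1 hS
  refine ⟨a, ?_⟩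
  rw [Nat.card_Icc, ← Ico_add_one_right_eq_Icc]
  congr 1
  omega

theorem card_filter_add_one_mem_Ico (a c : ℕ) :
    #((Ico a (a + c)).filter (· + 1 ∈ Ico a (a + c))) = c - 1 := by
  have : (Ico a (a + c)).filter (· + 1 ∈ Ico a (a + c)) = Ico a (a + c - 1) := by
    ext n
    simp only [mem_filter, mem_Ico]
    omega
  rw [this, Nat.card_Ico]
  omega

theorem card_filter_add_one_mem_add_one_eq_card_iff (hS : S.Nonempty) :
    #(S.filter (· + 1 ∈ S)) + 1 = #S ↔ ∃ a, S = Ico a (a + #S) := by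
  refine ⟨exists_eq_Ico_of_card_filter_add_one_mem hS, fun ⟨a, ha⟩ => ?_⟩
  have hpos := hS.card_pos
  rw [ha, card_filter_add_one_mem_Ico, ← ha]
  omega

end Finset

def succInPart {m : ℕ} (U : Finset (Fin m)) : Finset (Fin m) :=
  U.filter fun i => (i : ℕ) + 1 ∈ U.image Fin.val

section succInPart

variable {m : ℕ} {U : Finset (Fin m)}

theorem image_val_succInPart :
    (succInPart U).image Fin.val = (U.image Fin.val).filter (· + 1 ∈ U.image Fin.val) := by
  rw [succInPart, filter_image]

theorem card_succInPart_eq :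
    #(succInPart U) = #((U.image Fin.val).filter (· + 1 ∈ U.image Fin.val)) := by
  rw [← image_val_succInPart, card_image_of_injective _ Fin.val_injective]

theorem card_succInPart_lt (hU : U.Nonempty) : #(succInPart U) < #U := by
  simpa only [card_succInPart_eq, card_image_of_injective _ Fin.val_injective] using
    card_filter_add_one_mem_lt (hU.image Fin.val)

theorem card_succInPart_add_one_eq_card_iff (hU : U.Nonempty) :
    #(succInPart U) + 1 = #U ↔ ∃ a, U.image Fin.val = Ico a (a + #U) := by
  simpa only [card_succInPart_eq, card_image_of_injective _ Fin.val_injective] using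
    card_filter_add_one_mem_add_one_eq_card_iff (hU.image Fin.val)

end succInPart

theorem List.mem_foldr_union {α : Type*} [DecidableEq α] (L : List (Finset α)) (a : α) :
    a ∈ L.foldr (· ∪ ·) ∅ ↔ ∃ j : Fin L.length, a ∈ L.get j := by
  induction L with
  | nil => simp
  | cons U L ih => simp [ih, Fin.exists_fin_succ]

theorem List.Pairwise.rel_get_of_ne {α : Type*} {R : α → α → Prop} [Std.Symm R] {L : List α}
    (h : L.Pairwise R) {i j : Fin L.length} (hij : i ≠ j) : R (L.get i) (L.get j) := by
  rcases hij.lt_or_gt with hlt | hlt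
  · exact h.rel_get_of_lt hlt
  · exact symm (h.rel_get_of_lt hlt)

theorem sum_card_get_eq_of_isOrderedPartition {m : ℕ} {L : List (Finset (Fin m))}
    (hL : IsOrderedPartition m L) : ∑ j, #(L.get j) = m := by
  have huniv : univ.biUnion L.get = univ := by
    rw [← hL.2.2]
    ext i
    simp [List.mem_foldr_union]
  rw [← card_biUnion (fun i _ j _ => hL.2.1.rel_get_of_ne), huniv, card_univ,
    Fintype.card_fin]

theorem sigmaSet_eq_biUnion (m : ℕ) (L : List (Finset (Fin m))) :
    sigmaSet m L = univ.biUnion fun j => succInPart (L.get j) := by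
  ext i
  simp only [sigmaSet, succInPart, mem_filter, mem_univ, true_and, mem_biUnion, mem_image]
  constructor
  · rintro ⟨hi, j, hij, hsucc⟩
    exact ⟨j, hij, _, hsucc, rfl⟩
  · rintro ⟨j, hij, ⟨k, hk⟩, hkj, rfl : k = i + 1⟩
    exact ⟨hk, j, hij, hkj⟩

theorem card_sigmaSet_of_isOrderedPartition {m : ℕ} {L : List (Finset (Fin m))}
    (hL : IsOrderedPartition m L) : #(sigmaSet m L) = ∑ j, #(succInPart (L.get j)) := by
  rw [sigmaSet_eq_biUnion]
  exact card_biUnion fun i _ j _ hij =>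
    (hL.2.1.rel_get_of_ne hij).mono (filter_subset _ _) (filter_subset _ _)

theorem stmt14_general (m : ℕ) (L : List (Finset (Fin m)))
    (hL : IsOrderedPartition m L) :
    (sigmaSet m L).card ≤ m - L.length ∧
    ((sigmaSet m L).card = m - L.length ↔
      -- every part `U_j` is an interval of consecutive integers
      ∀ j : Fin L.length, ∃ a : ℕ,
        (L.get j).image Fin.val = Finset.Ico a (a + (L.get j).card)) := by
  have hpart (j : Fin L.length) : (L.get j).Nonempty := hL.1 _ (L.get_mem j)
  have hle (j : Fin L.length) : #(succInPart (L.get j)) + 1 ≤ #(L.get j) :=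
    card_succInPart_lt (hpart j)
  have hcard : #(sigmaSet m L) + L.length = ∑ j, (#(succInPart (L.get j)) + 1) := by
    simp [sum_add_distrib, card_sigmaSet_of_isOrderedPartition hL]
  have hm := sum_card_get_eq_of_isOrderedPartition hL
  have htotal : ∑ j, (#(succInPart (L.get j)) + 1) ≤ ∑ j, #(L.get j) :=
    sum_le_sum fun j _ => hle j
  refine ⟨by omega, ?_⟩
  calc #(sigmaSet m L) = m - L.length
      ↔ ∑ j, (#(succInPart (L.get j)) + 1) = ∑ j, #(L.get j) := by rw [hm]; omega
    _ ↔ ∀ j, #(succInPart (L.get j)) + 1 = #(L.get j) := by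
      simpa only [mem_univ, true_implies] using
        sum_eq_sum_iff_of_le (s := univ) fun j _ => hle j
    _ ↔ _ := forall_congr' fun j => card_succInPart_add_one_eq_card_iff (hpart j)

theorem stmt14 (m : ℕ) (hm : 1 ≤ m) (L : List (Finset (Fin m)))
    (hL : IsOrderedPartition m L) :
    (sigmaSet m L).card ≤ m - L.length ∧
    ((sigmaSet m L).card = m - L.length ↔
      -- every part `U_j` is an interval of consecutive integers
      ∀ j : Fin L.length, ∃ a : ℕ,
        (L.get j).image Fin.val = Finset.Ico a (a + (L.get j).card)) :=
  stmt14_general m L hL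
end

section
/- Let q, p ≥ 1 and let A be a q × p matrix with natural-number entries such that: each of the numbers 1, …, q + p − 1 occurs exactly once as an entry of A and all remaining entries are 0; every row and every column of A contains a nonzero entry; and the nonzero entries strictly increase along every row (left to right) and along every column (top to bottom). Suppose moreover that in every row and in every column of A the set of nonzero entries consists of consecutive integers. Then all the nonzero entries of A form one continuous snake: there exist indices 1 = n_0 ≤ n_1 < n_2 < ⋯ < n_r = q + p − 1 such that for each l = 1, …, r the entries n_{l−1}, n_{l−1} + 1, …, n_l all lie in a single row of A occupying consecutive columns, or all lie in a single column of A occupying consecutive rows, and these two cases alternate with l (consecutive segments alternate between lying in a row and lying in a column). -/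
/-- The entries `a, a+1, …, b` form a segment of a snake lying in a single row,
occupying consecutive columns. -/
def RowSeg (q p : ℕ) (A : Fin q → Fin p → ℕ) (a b : ℕ) : Prop :=
  ∃ i : Fin q, ∃ j₀ : ℕ, ∀ d : ℕ, d ≤ b - a →
    ∃ h : j₀ + d < p, A i ⟨j₀ + d, h⟩ = a + d

/-- The entries `a, a+1, …, b` form a segment of a snake lying in a single column,
occupying consecutive rows. -/
def ColSeg (q p : ℕ) (A : Fin q → Fin p → ℕ) (a b : ℕ) : Prop :=
  ∃ j : Fin p, ∃ i₀ : ℕ, ∀ d : ℕ, d ≤ b - a →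
    ∃ h : i₀ + d < q, A ⟨i₀ + d, h⟩ j = a + d

/-!
Let `(row k, col k)` be the cell holding the entry `k`, for `1 ≤ k ≤ N := q + p - 1`. Since the
entries of a row are consecutive integers, the `k` lying in a given row form an interval, so as `k`
runs from `1` to `N` the row changes at most `q - 1` times; likewise the column changes at most
`p - 1` times. Each of the `N - 1 = q + p - 2` steps `k → k + 1` changes the row or the column, so
no step changes both, and every row and every column is visited. Monotonicity along rows and
columns makes every step go right or down, and since no row or column is skipped it moves by
exactly one cell. The segments of the snake are the maximal runs of steps in one direction.
-/

open Finset

theorem card_filter_ne_succ_lt_card_image {α : Type*} [DecidableEq α] {u : ℕ → α} {a b : ℕ}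
    (hab : a ≤ b) (hu : ∀ i, (Set.Icc a b ∩ u ⁻¹' {i}).OrdConnected) :
    #{k ∈ Ico a b | u (k + 1) ≠ u k} < #((Icc a b).image u) := by
  have fiber : ∀ x y z, a ≤ x → x ≤ z → z ≤ y → y ≤ b → u x = u y → u z = u x :=
    fun x y z hx hxz hzy hy hxy =>
      ((hu (u x)).out ⟨⟨hx, by omega⟩, rfl⟩ ⟨⟨by omega, hy⟩, hxy.symm⟩ ⟨hxz, hzy⟩).2
  have hua : u a ∈ (Icc a b).image u := mem_image_of_mem u (mem_Icc.2 ⟨le_rfl, hab⟩)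
  -- `k ↦ u (k + 1)` injects the change points into the values other than `u a`.
  calc #{k ∈ Ico a b | u (k + 1) ≠ u k}
      ≤ #(((Icc a b).image u).erase (u a)) := by
        refine card_le_card_of_injOn (fun k => u (k + 1)) ?_ ?_
        · intro k hk
          simp only [coe_filter, mem_Ico, Set.mem_ofPred_eq] at hk
          refine mem_erase.2 ⟨fun h => hk.2 ?_, mem_image_of_mem u (mem_Icc.2 ⟨by omega, by omega⟩)⟩
          have h : u (k + 1) = u a := h
          rw [h, fiber a (k + 1) k le_rfl hk.1.1 (by omega) (by omega) h.symm]
        · intro k hk k' hk' h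
          simp only [coe_filter, mem_Ico, Set.mem_ofPred_eq] at hk hk'
          by_contra hne
          rcases Nat.lt_or_gt_of_ne hne with hlt | hlt
          · exact hk'.2 (h.symm.trans (fiber _ _ k' (by omega) hlt (by omega) (by omega) h).symm)
          · exact hk.2 (h.trans (fiber _ _ k (by omega) hlt (by omega) (by omega) h.symm).symm)
    _ < #((Icc a b).image u) := card_erase_lt_of_mem hua

theorem surjOn_and_eq_or_eq_of_ordConnected_fibers {q p N : ℕ} {u : ℕ → Fin q} {v : ℕ → Fin p}
    (hN : N + 1 = q + p) (h1N : 1 ≤ N)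
    (hu : ∀ i, (Set.Icc 1 N ∩ u ⁻¹' {i}).OrdConnected)
    (hv : ∀ j, (Set.Icc 1 N ∩ v ⁻¹' {j}).OrdConnected)
    (hchange : ∀ k ∈ Ico 1 N, u (k + 1) ≠ u k ∨ v (k + 1) ≠ v k) :
    Set.SurjOn u (Set.Icc 1 N) Set.univ ∧ Set.SurjOn v (Set.Icc 1 N) Set.univ ∧
      ∀ k ∈ Ico 1 N, u (k + 1) = u k ∨ v (k + 1) = v k := by
  set U := {k ∈ Ico 1 N | u (k + 1) ≠ u k}
  set V := {k ∈ Ico 1 N | v (k + 1) ≠ v k}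
  have hU : #U < _ := card_filter_ne_succ_lt_card_image h1N hu
  have hV : #V < _ := card_filter_ne_succ_lt_card_image h1N hv
  have hUq : #((Icc 1 N).image u) ≤ q := (card_le_univ _).trans_eq (Fintype.card_fin q)
  have hVp : #((Icc 1 N).image v) ≤ p := (card_le_univ _).trans_eq (Fintype.card_fin p)
  have hcover : Ico 1 N ⊆ U ∪ V := fun k hk => by
    rcases hchange k hk with h | h
    · exact mem_union_left _ (mem_filter.2 ⟨hk, h⟩)
    · exact mem_union_right _ (mem_filter.2 ⟨hk, h⟩)
  have hsteps : #(Ico 1 N) ≤ #U + #V - #(U ∩ V) := by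
    rw [← card_union_add_card_inter U V, Nat.add_sub_cancel]
    exact card_le_card hcover
  rw [Nat.card_Ico] at hsteps
  -- The `q + p - 2` steps are covered by at most `q - 1` row changes and `p - 1` column
  -- changes, so both bounds are attained and no step is counted twice.
  have hsurj : ∀ {n} (w : ℕ → Fin n), #((Icc 1 N).image w) = n →
      Set.SurjOn w (Set.Icc 1 N) Set.univ := fun w hw m _ => by
    have hm : m ∈ (Icc 1 N).image w := by
      rw [eq_univ_of_card _ (hw.trans (Fintype.card_fin _).symm)]
      exact mem_univ m
    obtain ⟨k, hk, rfl⟩ := mem_image.1 hm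
    exact ⟨k, by simpa using hk, rfl⟩
  refine ⟨hsurj u (by omega), hsurj v (by omega), fun k hk => ?_⟩
  have hUV : U ∩ V = ∅ := by
    have := card_le_card (inter_subset_left (s₁ := U) (s₂ := V))
    exact card_eq_zero.1 (by omega)
  by_contra! h
  exact (notMem_empty k) (hUV ▸ mem_inter.2 ⟨mem_filter.2 ⟨hk, h.1⟩, mem_filter.2 ⟨hk, h.2⟩⟩)

theorem monotoneOn_Icc_of_le_succ {α : Type*} [Preorder α] {f : ℕ → α} {a b : ℕ}
    (hf : ∀ k ∈ Ico a b, f k ≤ f (k + 1)) : MonotoneOn f (Set.Icc a b) :=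
  monotoneOn_of_le_succ Set.ordConnected_Icc fun k _ hk hk1 =>
    hf k (mem_Ico.2 ⟨hk.1, Order.succ_le_iff.1 hk1.2⟩)

theorem wcovBy_succ_of_monotoneOn_of_surjOn {α : Type*} [Preorder α] {u : ℕ → α} {a b k : ℕ}
    (hmono : MonotoneOn u (Set.Icc a b)) (hsurj : Set.SurjOn u (Set.Icc a b) Set.univ)
    (hk : k ∈ Ico a b) : u k ⩿ u (k + 1) := by
  obtain ⟨hak, hkb⟩ := mem_Ico.1 hk
  have mem : ∀ {j}, a ≤ j → j ≤ b → j ∈ Set.Icc a b := fun h h' => ⟨h, h'⟩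
  refine ⟨hmono (mem hak hkb.le) (mem (by omega) hkb) k.le_succ, fun m hkm hmk => ?_⟩
  obtain ⟨j, hj, rfl⟩ := hsurj (Set.mem_univ m)
  rcases le_or_gt j k with hjk | hkj
  · exact hkm.not_ge (hmono hj (mem hak hkb.le) hjk)
  · exact hmk.not_ge (hmono (mem (by omega) hkb) hj hkj)

theorem eq_and_covBy_or_eq_and_covBy_of_ordConnected_fibers {q p N : ℕ} {u : ℕ → Fin q}
    {v : ℕ → Fin p} (hN : N + 1 = q + p) (h1N : 1 ≤ N)
    (hu : ∀ i, (Set.Icc 1 N ∩ u ⁻¹' {i}).OrdConnected)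
    (hv : ∀ j, (Set.Icc 1 N ∩ v ⁻¹' {j}).OrdConnected)
    (hstep : ∀ k ∈ Ico 1 N, (v (k + 1) = v k → u k < u (k + 1)) ∧
      (u (k + 1) = u k → v k < v (k + 1))) :
    ∀ k ∈ Ico 1 N, (u (k + 1) = u k ∧ v k ⋖ v (k + 1)) ∨ (v (k + 1) = v k ∧ u k ⋖ u (k + 1)) := by
  have hchange : ∀ k ∈ Ico 1 N, u (k + 1) ≠ u k ∨ v (k + 1) ≠ v k := fun k hk => by
    by_contra! h
    exact (hstep k hk).1 h.2 |>.ne h.1.symm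
  obtain ⟨hsurju, hsurjv, hone⟩ :=
    surjOn_and_eq_or_eq_of_ordConnected_fibers hN h1N hu hv hchange
  have hsteps : ∀ k ∈ Ico 1 N,
      (u (k + 1) = u k ∧ v k < v (k + 1)) ∨ (v (k + 1) = v k ∧ u k < u (k + 1)) := fun k hk =>
    (hone k hk).imp (fun h => ⟨h, (hstep k hk).2 h⟩) (fun h => ⟨h, (hstep k hk).1 h⟩)
  have hmonou : MonotoneOn u (Set.Icc 1 N) := monotoneOn_Icc_of_le_succ fun k hk => by
    rcases hsteps k hk with h | h
    · exact h.1.ge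
    · exact h.2.le
  have hmonov : MonotoneOn v (Set.Icc 1 N) := monotoneOn_Icc_of_le_succ fun k hk => by
    rcases hsteps k hk with h | h
    · exact h.2.le
    · exact h.1.ge
  intro k hk
  refine (hsteps k hk).imp (fun h => ⟨h.1, ?_⟩) (fun h => ⟨h.1, ?_⟩)
  · exact (wcovBy_succ_of_monotoneOn_of_surjOn hmonov hsurjv hk).covBy_of_ne h.2.ne
  · exact (wcovBy_succ_of_monotoneOn_of_surjOn hmonou hsurju hk).covBy_of_ne h.2.ne

theorem exists_runs_of_lt (d : ℕ → Bool) {N : ℕ} (a : ℕ) (ha : a < N) :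
    ∃ (r : ℕ) (n : ℕ → ℕ) (t : ℕ → Bool), 1 ≤ r ∧ n 0 = a ∧ n r = N ∧ StrictMonoOn n (Set.Iic r) ∧
      (∀ l, 1 ≤ l → l < r → t (l + 1) = !t l) ∧
      ∀ l, 1 ≤ l → l ≤ r → ∀ k ∈ Ico (n (l - 1)) (n l), d k = t l := by
  have hex : ∃ b, a < b ∧ (b = N ∨ d b ≠ d a) := ⟨N, ha, Or.inl rfl⟩
  obtain ⟨hab, hb⟩ := Nat.find_spec hex
  have hbN : Nat.find hex ≤ N := Nat.find_min' hex ⟨ha, Or.inl rfl⟩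
  have hrun : ∀ k ∈ Ico a (Nat.find hex), d k = d a := fun k hk => by
    obtain ⟨hak, hkb⟩ := mem_Ico.1 hk
    rcases hak.eq_or_lt with rfl | hak
    · rfl
    · have := Nat.find_min hex hkb
      grind
  set b := Nat.find hex
  by_cases hbN' : b = N
  · refine ⟨1, fun l => if l = 0 then a else N, fun _ => d a, le_rfl, rfl, rfl, ?_,
      fun l h1 h2 => by omega, fun l h1 h2 k hk => ?_⟩
    · exact strictMonoOn_Iic_of_lt_succ fun m hm => by simp_all
    · obtain rfl : l = 1 := by omega
      exact hrun k (by simpa [hbN'] using hk)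
  obtain ⟨r, n, t, hr, hn0, hnr, hmono, halt, hruns⟩ := exists_runs_of_lt d (N := N) b (by omega)
  have ht1 : t 1 = !d a := by
    have hb1 : b < n 1 := hn0 ▸ hmono (by simp) (by simpa using hr) zero_lt_one
    rw [← hruns 1 le_rfl hr b (by simp [hn0, hb1])]
    exact Bool.eq_not_iff.2 (hb.resolve_left hbN')
  refine ⟨r + 1, fun l => if l = 0 then a else n (l - 1),
    fun l => if l ≤ 1 then d a else t (l - 1), by omega, rfl, by simpa using hnr, ?_, ?_, ?_⟩
  · refine strictMonoOn_Iic_of_lt_succ fun m hm => ?_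
    rcases m with _ | m
    · simp [hn0, hab]
    · simpa using hmono (by simp; omega) (by simp; omega) (Nat.lt_succ_self m)
  · intro l hl1 hlr
    rcases hl1.eq_or_lt with rfl | hl1
    · simp [ht1]
    · simpa [show ¬ l ≤ 1 by omega, show l ≠ 0 by omega, show l - 1 + 1 = l by omega] using
        halt (l - 1) (by omega) (by omega)
  · intro l hl1 hlr k hk
    rcases hl1.eq_or_lt with rfl | hl1
    · simpa [hn0] using hrun k (by simpa [hn0] using hk)
    · simpa [show ¬ l ≤ 1 by omega] using hruns (l - 1) (by omega) (by omega) k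
          (by simpa [show l ≠ 0 by omega, show l - 1 ≠ 0 by omega] using hk)
termination_by N - a

theorem exists_runs (d : ℕ → Bool) {a N : ℕ} (ha : a ≤ N) :
    ∃ (r : ℕ) (n : ℕ → ℕ) (t : ℕ → Bool), 1 ≤ r ∧ n 0 = a ∧ n r = N ∧
      MonotoneOn n (Set.Iic r) ∧ (∀ l, 1 ≤ l → l < r → n l < n (l + 1)) ∧
      (∀ l, 1 ≤ l → l < r → t (l + 1) = !t l) ∧
      ∀ l, 1 ≤ l → l ≤ r → ∀ k ∈ Ico (n (l - 1)) (n l), d k = t l := by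
  rcases ha.eq_or_lt with rfl | ha
  · exact ⟨1, fun _ => a, fun _ => true, le_rfl, rfl, rfl, fun _ _ _ _ _ => le_rfl,
      fun _ _ _ => by omega, fun _ _ _ => by omega, fun _ _ _ k hk => by simp at hk⟩
  obtain ⟨r, n, t, hr, hn0, hnr, hmono, halt, hruns⟩ := exists_runs_of_lt d a ha
  exact ⟨r, n, t, hr, hn0, hnr, hmono.monotoneOn,
    fun l _ hlr => hmono (by simp; omega) (by simp; omega) (Nat.lt_succ_self l), halt, hruns⟩

def Locates {q p : ℕ} (A : Fin q → Fin p → ℕ) (N : ℕ) (row : ℕ → Fin q) (col : ℕ → Fin p) :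
    Prop :=
  ∀ k ∈ Icc 1 N, ∀ i j, A i j = k ↔ row k = i ∧ col k = j

theorem exists_locates {q p N : ℕ} (hq : 1 ≤ q) (hp : 1 ≤ p) {A : Fin q → Fin p → ℕ}
    (hA : ∀ n : ℕ, 1 ≤ n → n ≤ N → ∃! ij : Fin q × Fin p, A ij.1 ij.2 = n) :
    ∃ row col, Locates A N row col := by
  have hex : ∀ k, ∃ ij : Fin q × Fin p, k ∈ Icc 1 N → ∀ i j, A i j = k ↔ ij = (i, j) := by
    intro k
    by_cases hk : k ∈ Icc 1 N
    · obtain ⟨ij, hij, huniq⟩ := hA k (mem_Icc.1 hk).1 (mem_Icc.1 hk).2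
      exact ⟨ij, fun _ i j => ⟨fun h => (huniq (i, j) h).symm, fun h => by subst h; exact hij⟩⟩
    · exact ⟨(⟨0, hq⟩, ⟨0, hp⟩), fun h => absurd h hk⟩
  choose ij hij using hex
  exact ⟨fun k => (ij k).1, fun k => (ij k).2, fun k hk i j => (hij k hk i j).trans Prod.ext_iff⟩

namespace Locates

variable {q p N : ℕ} {A : Fin q → Fin p → ℕ} {row : ℕ → Fin q} {col : ℕ → Fin p}

theorem swap (hloc : Locates A N row col) : Locates (Function.swap A) N col row :=
  fun k hk j i => (hloc k hk i j).trans and_comm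

theorem apply_eq (hloc : Locates A N row col) {k : ℕ} (hk : k ∈ Icc 1 N) :
    A (row k) (col k) = k :=
  (hloc k hk _ _).2 ⟨rfl, rfl⟩

theorem ordConnected_row_fibers (hloc : Locates A N row col)
    (hcons : ∀ i j j' c, A i j ≠ 0 → A i j' ≠ 0 → A i j ≤ c → c ≤ A i j' → ∃ j'', A i j'' = c)
    (i : Fin q) : (Set.Icc 1 N ∩ row ⁻¹' {i}).OrdConnected := by
  refine ⟨fun x ⟨⟨hx1, hxN⟩, hxi⟩ y ⟨⟨hy1, hyN⟩, hyi⟩ z ⟨hxz, hzy⟩ => ?_⟩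
  rw [Set.mem_preimage, Set.mem_singleton_iff] at hxi hyi
  have hAx := hloc.apply_eq (mem_Icc.2 ⟨hx1, hxN⟩)
  have hAy := hloc.apply_eq (mem_Icc.2 ⟨hy1, hyN⟩)
  rw [hxi] at hAx
  rw [hyi] at hAy
  have hz : z ∈ Icc 1 N := mem_Icc.2 ⟨by omega, by omega⟩
  obtain ⟨j, hj⟩ := hcons i (col x) (col y) z (by omega) (by omega) (by omega) (by omega)
  exact ⟨mem_Icc.1 hz, ((hloc z hz i j).1 hj).1⟩

theorem col_lt_col_succ (hloc : Locates A N row col)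
    (hinc : ∀ i j j', j < j' → A i j ≠ 0 → A i j' ≠ 0 → A i j < A i j')
    {k : ℕ} (hk : k ∈ Ico 1 N) (hrow : row (k + 1) = row k) : col k < col (k + 1) := by
  obtain ⟨hk1, hkN⟩ := mem_Ico.1 hk
  have hAk := hloc.apply_eq (mem_Icc.2 ⟨hk1, hkN.le⟩)
  have hAk1 := hloc.apply_eq (k := k + 1) (mem_Icc.2 ⟨by omega, hkN⟩)
  rw [hrow] at hAk1
  refine lt_of_not_ge fun hle => ?_
  rcases hle.lt_or_eq with hlt | heq
  · have := hinc (row k) _ _ hlt (by omega) (by omega)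
    omega
  · rw [heq] at hAk1
    omega

theorem rowSeg (hloc : Locates A N row col) {a b : ℕ} (ha : 1 ≤ a) (hab : a ≤ b) (hb : b ≤ N)
    (hstep : ∀ k ∈ Ico a b, row (k + 1) = row k ∧ col k ⋖ col (k + 1)) : RowSeg q p A a b := by
  have hpath : ∀ d ≤ b - a, row (a + d) = row a ∧ (col (a + d) : ℕ) = col a + d := by
    intro d hd
    induction d with
    | zero => simp
    | succ d ih =>
      obtain ⟨ih1, ih2⟩ := ih (by omega)
      obtain ⟨hrow, hcol⟩ := hstep (a + d) (mem_Ico.2 ⟨by omega, by omega⟩)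
      rw [Fin.covBy_iff, Nat.covBy_iff_add_one_eq] at hcol
      rw [← add_assoc]
      exact ⟨hrow.trans ih1, by omega⟩
  refine ⟨row a, col a, fun d hd => ?_⟩
  obtain ⟨hrow, hcol⟩ := hpath d hd
  have hlt : (col a : ℕ) + d < p := hcol ▸ (col (a + d)).isLt
  refine ⟨hlt, ?_⟩
  rw [← hloc.apply_eq (k := a + d) (mem_Icc.2 ⟨by omega, by omega⟩), hrow]
  congr 1
  exact Fin.ext hcol.symm

end Locates

theorem stmt15_general (q p : ℕ) (hq : 1 ≤ q) (hp : 1 ≤ p) (A : Fin q → Fin p → ℕ)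
    -- each of `1, …, q+p-1` occurs exactly once as an entry of `A`:
    (h1 : ∀ n : ℕ, 1 ≤ n → n ≤ q + p - 1 → ∃! ij : Fin q × Fin p, A ij.1 ij.2 = n)
    -- nonzero entries strictly increase along rows and columns:
    (h5 : ∀ i : Fin q, ∀ j j' : Fin p, j < j' → A i j ≠ 0 → A i j' ≠ 0 → A i j < A i j')
    (h6 : ∀ j : Fin p, ∀ i i' : Fin q, i < i' → A i j ≠ 0 → A i' j ≠ 0 → A i j < A i' j)
    -- the nonzero entries of each row and each column are consecutive integers:
    (h7 : ∀ i : Fin q, ∀ j j' : Fin p, ∀ c, A i j ≠ 0 → A i j' ≠ 0 →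
      A i j ≤ c → c ≤ A i j' → ∃ j'' : Fin p, A i j'' = c)
    (h8 : ∀ j : Fin p, ∀ i i' : Fin q, ∀ c, A i j ≠ 0 → A i' j ≠ 0 →
      A i j ≤ c → c ≤ A i' j → ∃ i'' : Fin q, A i'' j = c) :
    -- then the nonzero entries of `A` form one continuous snake:
    ∃ r : ℕ, ∃ n : ℕ → ℕ, ∃ t : ℕ → Bool,
      1 ≤ r ∧ n 0 = 1 ∧ n r = q + p - 1 ∧
      n 0 ≤ n 1 ∧ (∀ l, 1 ≤ l → l < r → n l < n (l + 1)) ∧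
      -- consecutive segments alternate between rows and columns:
      (∀ l, 1 ≤ l → l < r → t (l + 1) = !t l) ∧
      -- each segment lies in a single row (occupying consecutive columns) or in a
      -- single column (occupying consecutive rows):
      (∀ l, 1 ≤ l → l ≤ r →
        if t l then RowSeg q p A (n (l - 1)) (n l)
        else ColSeg q p A (n (l - 1)) (n l)) := by
  set N := q + p - 1
  obtain ⟨row, col, hloc⟩ := exists_locates hq hp h1
  have hsteps := eq_and_covBy_or_eq_and_covBy_of_ordConnected_fibers (by omega : N + 1 = q + p)
    (by omega) (hloc.ordConnected_row_fibers h7) (hloc.swap.ordConnected_row_fibers h8)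
    fun k hk => ⟨hloc.swap.col_lt_col_succ h6 hk, hloc.col_lt_col_succ h5 hk⟩
  obtain ⟨r, n, t, hr, hn0, hnr, hmono, hstrict, halt, hruns⟩ :=
    exists_runs (fun k => decide (row (k + 1) = row k)) (by omega : 1 ≤ N)
  have hmono' : ∀ {l l'}, l ≤ l' → l' ≤ r → n l ≤ n l' := fun hll' hl' =>
    hmono (Set.mem_Iic.2 (hll'.trans hl')) (Set.mem_Iic.2 hl') hll'
  refine ⟨r, n, t, hr, hn0, hnr, hmono' zero_le_one hr, hstrict, halt, fun l hl1 hlr => ?_⟩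
  have ha : 1 ≤ n (l - 1) := hn0 ▸ hmono' (Nat.zero_le _) (by omega)
  have hab : n (l - 1) ≤ n l := hmono' (Nat.sub_le l 1) hlr
  have hb : n l ≤ N := hnr ▸ hmono' hlr le_rfl
  have hIco : ∀ k ∈ Ico (n (l - 1)) (n l), k ∈ Ico 1 N := fun k hk => by
    simp only [mem_Ico] at hk ⊢; omega
  cases ht : t l
  -- `ColSeg q p A` unfolds to `RowSeg p q (Function.swap A)`.
  · refine hloc.swap.rowSeg ha hab hb fun k hk => ?_
    have hrow : row (k + 1) ≠ row k := by simpa [ht] using hruns l hl1 hlr k hk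
    exact (hsteps k (hIco k hk)).resolve_left (fun h => hrow h.1)
  · refine hloc.rowSeg ha hab hb fun k hk => ?_
    have hrow : row (k + 1) = row k := by simpa [ht] using hruns l hl1 hlr k hk
    exact (hsteps k (hIco k hk)).resolve_right fun h => h.2.ne hrow.symm

theorem stmt15 (q p : ℕ) (hq : 1 ≤ q) (hp : 1 ≤ p) (A : Fin q → Fin p → ℕ)
    -- each of `1, …, q+p-1` occurs exactly once as an entry of `A`:
    (h1 : ∀ n : ℕ, 1 ≤ n → n ≤ q + p - 1 → ∃! ij : Fin q × Fin p, A ij.1 ij.2 = n)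
    -- all remaining entries are `0` (entries do not exceed `q+p-1`):
    (h2 : ∀ i j, A i j ≤ q + p - 1)
    -- every row and every column contains a nonzero entry:
    (h3 : ∀ i : Fin q, ∃ j, A i j ≠ 0)
    (h4 : ∀ j : Fin p, ∃ i, A i j ≠ 0)
    -- nonzero entries strictly increase along rows and columns:
    (h5 : ∀ i : Fin q, ∀ j j' : Fin p, j < j' → A i j ≠ 0 → A i j' ≠ 0 → A i j < A i j')
    (h6 : ∀ j : Fin p, ∀ i i' : Fin q, i < i' → A i j ≠ 0 → A i' j ≠ 0 → A i j < A i' j)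
    -- the nonzero entries of each row and each column are consecutive integers:
    (h7 : ∀ i : Fin q, ∀ j j' : Fin p, ∀ c, A i j ≠ 0 → A i j' ≠ 0 →
      A i j ≤ c → c ≤ A i j' → ∃ j'' : Fin p, A i j'' = c)
    (h8 : ∀ j : Fin p, ∀ i i' : Fin q, ∀ c, A i j ≠ 0 → A i' j ≠ 0 →
      A i j ≤ c → c ≤ A i' j → ∃ i'' : Fin q, A i'' j = c) :
    -- then the nonzero entries of `A` form one continuous snake:
    ∃ r : ℕ, ∃ n : ℕ → ℕ, ∃ t : ℕ → Bool,
      1 ≤ r ∧ n 0 = 1 ∧ n r = q + p - 1 ∧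
      n 0 ≤ n 1 ∧ (∀ l, 1 ≤ l → l < r → n l < n (l + 1)) ∧
      -- consecutive segments alternate between rows and columns:
      (∀ l, 1 ≤ l → l < r → t (l + 1) = !t l) ∧
      -- each segment lies in a single row (occupying consecutive columns) or in a
      -- single column (occupying consecutive rows):
      (∀ l, 1 ≤ l → l ≤ r →
        if t l then RowSeg q p A (n (l - 1)) (n l)
        else ColSeg q p A (n (l - 1)) (n l)) :=
  stmt15_general q p hq hp A h1 h5 h6 h7 h8
end

section
/- For every simplicial complex K on the vertex set [m], the real moment-angle complex R_K ⊆ [−1,1]^m is a deformation retract of the coordinate-arrangement complement U_ℝ(K): there is a continuous map H : U_ℝ(K) × [0,1] → U_ℝ(K) with H(x, 0) = x for all x, H(x, 1) ∈ R_K for all x, and H(x, 1) = x for all x ∈ R_K. In particular, the inclusion R_K ↪ U_ℝ(K) is a homotopy equivalence. -/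
/-- The coordinate subspace `C_I = {x : x_i = 0 for all i ∈ I}`. -/
def coordSubspace (m : ℕ) (I : Finset (Fin m)) : Set (Fin m → ℝ) :=
  {x | ∀ i ∈ I, x i = 0}

/-- The complement `U_ℝ(K)` of the coordinate arrangement of `K`. -/
def Ureal (m : ℕ) (K : Set (Finset (Fin m))) : Set (Fin m → ℝ) :=
  Set.univ \ ⋃ I ∈ {I : Finset (Fin m) | I.Nonempty ∧ I ∉ K}, coordSubspace m I

/-- The real moment-angle complex
`R_K = ⋃_{τ ∈ K} {x ∈ [-1,1]^m : x_i ∈ {-1,1} for all i ∉ τ}`. -/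
def momentAngleR (m : ℕ) (K : Set (Finset (Fin m))) : Set (Fin m → ℝ) :=
  ⋃ τ ∈ K, {x | (∀ i, x i ∈ Set.Icc (-1 : ℝ) 1) ∧
    ∀ i, i ∉ τ → (x i = -1 ∨ x i = 1)}

/-!
Let `A = ⋃_{I ∉ K} C_I`, so that `U_ℝ(K) = Aᶜ`, and let `c(x) = min(1, d∞(x, A))`, which is
positive on `U_ℝ(K)`. The map `r(x)_i = x_i / max(c(x), |x_i|)` rescales each coordinate by a
positive factor, so the straight-line homotopy from `x` to `r(x)` stays in `U_ℝ(K)`. Coordinates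
with `|x_i| ≥ c(x)` are sent to `±1`, and the remaining ones form a simplex of `K`, because zeroing
them moves `x` by less than `d∞(x, A)`; hence `r(x) ∈ R_K`. A point of `R_K` is at sup-distance at
least `1` from `A`, so there `c = 1` and `r` is the identity.
-/

open Set Metric

open scoped ContinuousMap

structure IsDeformationRetraction {X : Type*} [TopologicalSpace X] (H : X × ℝ → X)
    (U A : Set X) : Prop where
  continuousOn : ContinuousOn H (U ×ˢ Icc 0 1)
  mapsTo : ∀ x ∈ U, ∀ t ∈ Icc (0 : ℝ) 1, H (x, t) ∈ U
  apply_zero : ∀ x ∈ U, H (x, 0) = x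
  apply_one_mem : ∀ x ∈ U, H (x, 1) ∈ A
  apply_one_of_mem : ∀ x ∈ A, H (x, 1) = x

namespace IsDeformationRetraction

variable {X : Type*} [TopologicalSpace X] {H : X × ℝ → X} {U A : Set X}

def retraction (hH : IsDeformationRetraction H U A) : C(U, A) where
  toFun x := ⟨H (x, 1), hH.apply_one_mem x x.2⟩
  continuous_toFun := (hH.continuousOn.comp_continuous
    (continuous_subtype_val.prodMk continuous_const)
    fun x => ⟨x.2, right_mem_Icc.2 zero_le_one⟩).subtype_mk _

def homotopy (hH : IsDeformationRetraction H U A) (hAU : A ⊆ U) :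
    ContinuousMap.Homotopy (ContinuousMap.id U)
      ((ContinuousMap.inclusion hAU).comp hH.retraction) where
  toFun p := ⟨H (p.2, p.1), hH.mapsTo p.2 p.2.2 p.1 p.1.2⟩
  continuous_toFun := (hH.continuousOn.comp_continuous
    ((continuous_subtype_val.comp continuous_snd).prodMk
      (continuous_subtype_val.comp continuous_fst))
    fun p => ⟨p.2.2, p.1.2⟩).subtype_mk _
  map_zero_left x := Subtype.ext (hH.apply_zero x x.2)
  map_one_left _ := rfl

noncomputable def homotopyEquiv (hH : IsDeformationRetraction H U A) (hAU : A ⊆ U) : A ≃ₕ U where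
  toFun := ContinuousMap.inclusion hAU
  invFun := hH.retraction
  left_inv := by
    convert ContinuousMap.Homotopic.refl (ContinuousMap.id A)
    exact ContinuousMap.ext fun x => Subtype.ext (hH.apply_one_of_mem x x.2)
  right_inv := ⟨(hH.homotopy hAU).symm⟩

end IsDeformationRetraction

-- Truncated at `1` and computed in `ℝ≥0∞`, so that it is `1` rather than a junk `0` when `s = ∅`.
noncomputable def truncInfDist {X : Type*} [PseudoMetricSpace X] (s : Set X) (x : X) : ℝ :=
  (min 1 (infEDist x s)).toReal

section truncInfDist

variable {X : Type*} [PseudoMetricSpace X] {s : Set X} {x y : X}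

lemma truncInfDist_le_dist (hy : y ∈ s) : truncInfDist s x ≤ dist x y :=
  ENNReal.toReal_le_of_le_ofReal dist_nonneg <|
    (min_le_right _ _).trans <| (infEDist_le_edist_of_mem hy).trans_eq (edist_dist x y)

lemma truncInfDist_pos (hs : IsClosed s) (hx : x ∉ s) : 0 < truncInfDist s x :=
  ENNReal.toReal_pos
    (lt_min one_pos (infEDist_pos_iff_notMem_closure.2 (by rwa [hs.closure_eq]))).ne'
    (ne_top_of_le_ne_top ENNReal.one_ne_top (min_le_left _ _))

lemma truncInfDist_eq_one (h : ∀ y ∈ s, 1 ≤ dist x y) : truncInfDist s x = 1 := by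
  have : 1 ≤ infEDist x s := le_infEDist.2 fun y hy => by
    simpa [edist_dist] using ENNReal.ofReal_le_ofReal (h y hy)
  simp [truncInfDist, min_eq_left this]

lemma continuous_truncInfDist : Continuous (truncInfDist s) :=
  ENNReal.continuousOn_toReal.comp_continuous (continuous_const.min continuous_infEDist)
    fun _ => ne_top_of_le_ne_top ENNReal.one_ne_top (min_le_left _ _)

end truncInfDist

def coordArrangement (m : ℕ) (K : Set (Finset (Fin m))) : Set (Fin m → ℝ) :=
  ⋃ I ∈ {I : Finset (Fin m) | I.Nonempty ∧ I ∉ K}, coordSubspace m I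

section Arrangement

variable {m : ℕ} {K : Set (Finset (Fin m))} {x y : Fin m → ℝ}

lemma Ureal_eq_compl : Ureal m K = (coordArrangement m K)ᶜ :=
  (compl_eq_univ_sdiff _).symm

lemma isClosed_coordSubspace (I : Finset (Fin m)) : IsClosed (coordSubspace m I) := by
  simp only [coordSubspace, ofPred_forall]
  exact isClosed_biInter fun i _ => isClosed_eq (continuous_apply i) continuous_const

lemma isClosed_coordArrangement : IsClosed (coordArrangement m K) :=
  (toFinite _).isClosed_biUnion fun I _ => isClosed_coordSubspace I

lemma mem_Ureal_iff :
    x ∈ Ureal m K ↔ ∀ I : Finset (Fin m), I.Nonempty → I ∉ K → ∃ i ∈ I, x i ≠ 0 := by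
  simp [Ureal_eq_compl, coordArrangement, coordSubspace]

lemma mem_Ureal_of_ne_zero (hx : x ∈ Ureal m K) (hxy : ∀ i, x i ≠ 0 → y i ≠ 0) :
    y ∈ Ureal m K :=
  mem_Ureal_iff.2 fun I hI hIK =>
    let ⟨i, hiI, hi⟩ := mem_Ureal_iff.1 hx I hI hIK
    ⟨i, hiI, hxy i hi⟩

lemma one_le_dist_of_mem_momentAngleR (hK : IsLowerSet K) (hx : x ∈ momentAngleR m K)
    (hy : y ∈ coordArrangement m K) : 1 ≤ dist x y := by
  obtain ⟨τ, hτ, -, hx⟩ := mem_iUnion₂.1 hx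
  obtain ⟨I, ⟨-, hIK⟩, hy⟩ := mem_iUnion₂.1 hy
  obtain ⟨i, hiI, hiτ⟩ := Finset.not_subset.1 fun hIτ => hIK (hK hIτ hτ)
  calc (1 : ℝ) = dist (x i) (y i) := by rcases hx i hiτ with h | h <;> simp [h, hy i hiI]
    _ ≤ dist x y := dist_le_pi_dist x y i

lemma momentAngleR_subset_Ureal (hK : IsLowerSet K) : momentAngleR m K ⊆ Ureal m K :=
  fun x hx => by
    rw [Ureal_eq_compl]
    exact fun hxA => absurd (one_le_dist_of_mem_momentAngleR hK hx hxA) (by simp)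

end Arrangement

noncomputable def momentAngleRetraction (m : ℕ) (K : Set (Finset (Fin m))) (x : Fin m → ℝ) :
    Fin m → ℝ :=
  fun i => x i / max (truncInfDist (coordArrangement m K) x) |x i|

section Retraction

variable {m : ℕ} {K : Set (Finset (Fin m))} {x : Fin m → ℝ}

lemma truncInfDist_coordArrangement_pos (hx : x ∈ Ureal m K) :
    0 < truncInfDist (coordArrangement m K) x :=
  truncInfDist_pos isClosed_coordArrangement (by rwa [Ureal_eq_compl] at hx)

lemma momentAngleRetraction_mem (hempty : ∅ ∈ K) (hx : x ∈ Ureal m K) :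
    momentAngleRetraction m K x ∈ momentAngleR m K := by
  set c := truncInfDist (coordArrangement m K) x
  have hc : 0 < c := truncInfDist_coordArrangement_pos hx
  set τ := Finset.univ.filter fun i => |x i| < c
  -- Zeroing the coordinates in `τ` moves `x` by less than `c`, so it cannot land in the arrangement.
  have hτ : τ ∈ K := by
    by_contra hτK
    have hne : τ.Nonempty := Finset.nonempty_iff_ne_empty.2 fun h => hτK (h ▸ hempty)
    have hy : τ.piecewise 0 x ∈ coordArrangement m K :=
      mem_biUnion (x := τ) ⟨hne, hτK⟩ fun i hi => τ.piecewise_eq_of_mem _ _ hi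
    refine (truncInfDist_le_dist hy).not_gt ((dist_pi_lt_iff hc).2 fun i => ?_)
    by_cases hi : i ∈ τ
    · simpa [hi, Real.dist_eq] using (Finset.mem_filter.1 hi).2
    · simpa [hi] using hc
  refine mem_biUnion hτ ⟨fun i => ?_, fun i hi => ?_⟩
  · have hD : 0 < max c |x i| := hc.trans_le (le_max_left _ _)
    refine abs_le.1 ?_
    rw [momentAngleRetraction, abs_div, abs_of_pos hD]
    exact div_le_one_of_le₀ (le_max_right _ _) hD.le
  · have hci : c ≤ |x i| := not_lt.1 (by simpa [τ] using hi)
    have hxi : x i ≠ 0 := abs_pos.1 (hc.trans_le hci)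
    change x i / max c |x i| = -1 ∨ x i / max c |x i| = 1
    rw [max_eq_right hci]
    rcases hxi.lt_or_gt with h | h
    · left; rw [abs_of_neg h, div_neg, div_self hxi]
    · right; rw [abs_of_pos h, div_self hxi]

lemma momentAngleRetraction_eq_self (hK : IsLowerSet K) (hx : x ∈ momentAngleR m K) :
    momentAngleRetraction m K x = x := by
  have hc : truncInfDist (coordArrangement m K) x = 1 :=
    truncInfDist_eq_one fun _ hy => one_le_dist_of_mem_momentAngleR hK hx hy
  obtain ⟨τ, -, hcube, -⟩ := mem_iUnion₂.1 hx
  funext i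
  simp [momentAngleRetraction, hc, max_eq_left (abs_le.2 (hcube i))]

lemma continuousOn_momentAngleRetraction :
    ContinuousOn (momentAngleRetraction m K) (Ureal m K) :=
  continuousOn_pi.2 fun i =>
    (continuous_apply i).continuousOn.div
      (continuous_truncInfDist.max (continuous_apply i).abs).continuousOn
      fun _ hx => ((truncInfDist_coordArrangement_pos hx).trans_le (le_max_left _ _)).ne'

lemma segment_momentAngleRetraction_subset_Ureal (hx : x ∈ Ureal m K) :
    segment ℝ x (momentAngleRetraction m K x) ⊆ Ureal m K := by
  rintro _ ⟨a, b, ha, hb, hab, rfl⟩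
  refine mem_Ureal_of_ne_zero hx fun i hxi => ?_
  have hD : 0 < max (truncInfDist (coordArrangement m K) x) |x i| :=
    (truncInfDist_coordArrangement_pos hx).trans_le (le_max_left _ _)
  have hs : 0 < a + b / max (truncInfDist (coordArrangement m K) x) |x i| := by
    rcases ha.eq_or_lt with rfl | ha
    · rw [zero_add] at hab ⊢
      exact hab ▸ one_div_pos.2 hD
    · exact add_pos_of_pos_of_nonneg ha (div_nonneg hb hD.le)
  convert mul_ne_zero hxi hs.ne' using 1
  simp only [Pi.add_apply, Pi.smul_apply, smul_eq_mul, momentAngleRetraction]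
  ring

end Retraction

theorem isDeformationRetraction_momentAngleR {m : ℕ} {K : Set (Finset (Fin m))}
    (hK : IsLowerSet K) (hempty : ∅ ∈ K) :
    IsDeformationRetraction (fun p => (1 - p.2) • p.1 + p.2 • momentAngleRetraction m K p.1)
      (Ureal m K) (momentAngleR m K) where
  continuousOn := by
    have hr : ContinuousOn (fun p : (Fin m → ℝ) × ℝ => momentAngleRetraction m K p.1)
        (Ureal m K ×ˢ Icc 0 1) :=
      continuousOn_momentAngleRetraction.comp continuousOn_fst fun _ hp => hp.1
    exact ((continuous_const.sub continuous_snd).smul continuous_fst).continuousOn.add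
      (continuous_snd.continuousOn.smul hr)
  mapsTo _ hx t ht := segment_momentAngleRetraction_subset_Ureal hx
    ⟨1 - t, t, sub_nonneg.2 ht.2, ht.1, sub_add_cancel 1 t, rfl⟩
  apply_zero x _ := by simp
  apply_one_mem x hx := by simpa using momentAngleRetraction_mem hempty hx
  apply_one_of_mem x hx := by simpa using momentAngleRetraction_eq_self hK hx

theorem stmt17 (m : ℕ) (hm : 1 ≤ m) (K : Set (Finset (Fin m)))
    (hK : IsSimplicialComplex m K) :
    (∃ H : (Fin m → ℝ) × ℝ → (Fin m → ℝ),
      ContinuousOn H (Ureal m K ×ˢ Set.Icc (0 : ℝ) 1) ∧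
      (∀ x ∈ Ureal m K, ∀ t ∈ Set.Icc (0 : ℝ) 1, H (x, t) ∈ Ureal m K) ∧
      (∀ x ∈ Ureal m K, H (x, 0) = x) ∧
      (∀ x ∈ Ureal m K, H (x, 1) ∈ momentAngleR m K) ∧
      (∀ x ∈ momentAngleR m K, H (x, 1) = x)) ∧
    -- In particular, the inclusion `R_K ↪ U_ℝ(K)` is a homotopy equivalence:
    ∃ e : ContinuousMap.HomotopyEquiv (↥(momentAngleR m K)) (↥(Ureal m K)),
      ∀ x, (e.toFun x : Fin m → ℝ) = x := by
  have hlow : IsLowerSet K := fun σ τ hτσ hσ => hK.1 σ hσ τ hτσ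
  have hH := isDeformationRetraction_momentAngleR hlow
    (hlow (Finset.empty_subset _) (hK.2 ⟨0, hm⟩))
  exact ⟨⟨_, hH.continuousOn, hH.mapsTo, hH.apply_zero, hH.apply_one_mem, hH.apply_one_of_mem⟩,
    hH.homotopyEquiv (momentAngleR_subset_Ureal hlow), fun _ => rfl⟩
end
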